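/- arXiv:2304.09841 — 5 statements merged into one kernel-verified Lean document; each statement's English description precedes it below -/
import Mathlib

section
/- Let k be a nonzero integer and c ∈ ℂ with c ∉ u([0,1]). Suppose φ : [0,1] → ℂ is a C² function that vanishes nowhere on [0,1] and satisfies the homogeneous distorted Rayleigh equation (u(y) − c) ∂_y( θ(y)^{-1} ∂_y φ(y) ) − (u(y) − c) k² θ(y)^{-1} φ(y) − (u'/θ)'(y) φ(y) = 0 on [0,1]. Then there exists a C² solution Φ of the same equation on [0,1] with Φ(0) = Φ(1) = 0 and Φ not identically zero if and only if ∫_0^1 θ(z)/φ(z)² dz = 0. -/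
/-!
Since `u - c` does not vanish, the equation is the Sturm–Liouville equation `(θ⁻¹ ψ')' = q ψ`.
The Wronskian `W = θ⁻¹ (φ ψ' - ψ φ')` of two solutions is constant and `(ψ / φ)' = W θ / φ²`
(reduction of order). A Dirichlet solution `ψ` therefore gives `W ∫₀¹ θ / φ² = 0` with `W ≠ 0`,
since `W = 0` would force `ψ = 0`; conversely, if `∫₀¹ θ / φ² = 0` then `φ(y) ∫₀ʸ θ / φ²`
is a nontrivial Dirichlet solution.
-/

open Set MeasureTheory

section Interval

variable {E : Type*} [NormedAddCommGroup E] [NormedSpace ℝ E] {a b : ℝ}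

theorem eqOn_Icc_of_hasDerivWithinAt {f g f' : ℝ → E}
    (hf : ∀ x ∈ Icc a b, HasDerivWithinAt f (f' x) (Icc a b) x)
    (hg : ∀ x ∈ Icc a b, HasDerivWithinAt g (f' x) (Icc a b) x) (ha : f a = g a) :
    EqOn f g (Icc a b) := by
  have right_deriv {h : ℝ → E} (hh : ∀ x ∈ Icc a b, HasDerivWithinAt h (f' x) (Icc a b) x)
      (x : ℝ) (hx : x ∈ Ico a b) : HasDerivWithinAt h (f' x) (Ici x) x :=
    (hh x (Ico_subset_Icc_self hx)).mono_of_mem_nhdsWithin (Icc_mem_nhdsGE_of_mem hx)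
  exact eq_of_has_deriv_right_eq (right_deriv hf) (right_deriv hg)
    (fun x hx => (hf x hx).continuousWithinAt) (fun x hx => (hg x hx).continuousWithinAt) ha

variable [CompleteSpace E] {f : ℝ → E}

theorem hasDerivWithinAt_integral_Icc (hab : a ≤ b) (hf : ContinuousOn f (Icc a b)) {y : ℝ}
    (hy : y ∈ Icc a b) : HasDerivWithinAt (fun x => ∫ t in a..x, f t) (f y) (Icc a b) y := by
  set F := IccExtend hab ((Icc a b).domRestrict f)
  have hF : Continuous F := (continuousOn_iff_continuous_domRestrict.mp hf).Icc_extend'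
  have hFf : EqOn F f (Icc a b) := fun x hx => IccExtend_of_mem hab _ hx
  have hint : ∀ x ∈ Icc a b, ∫ t in a..x, f t = ∫ t in a..x, F t := fun x hx =>
    intervalIntegral.integral_congr fun t ht =>
      (hFf (uIcc_subset_Icc (left_mem_Icc.mpr hab) hx ht)).symm
  rw [← hFf hy]
  exact ((hF.integral_hasStrictDerivAt a y).hasDerivAt.hasDerivWithinAt).congr_of_mem hint hy

theorem contDiffOn_integral_Icc {n : ℕ∞} (hab : a < b) (hf : ContDiffOn ℝ n f (Icc a b)) :
    ContDiffOn ℝ ((n : WithTop ℕ∞) + 1) (fun x => ∫ t in a..x, f t) (Icc a b) := by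
  have hderiv (y) (hy : y ∈ Icc a b) := hasDerivWithinAt_integral_Icc hab.le hf.continuousOn hy
  exact (contDiffOn_succ_iff_derivWithin (uniqueDiffOn_Icc hab)).mpr
    ⟨fun y hy => (hderiv y hy).differentiableWithinAt, by simp,
      hf.congr fun y hy => (hderiv y hy).derivWithin (uniqueDiffOn_Icc hab y hy)⟩

end Interval

namespace SturmLiouville

variable {𝕜 : Type*} [RCLike 𝕜] {p q φ ψ : ℝ → 𝕜} {s : Set ℝ} {a b y : ℝ}

noncomputable def flux (p : ℝ → 𝕜) (s : Set ℝ) (ψ : ℝ → 𝕜) (y : ℝ) : 𝕜 :=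
  p y * derivWithin ψ s y

noncomputable def wronskian (p : ℝ → 𝕜) (s : Set ℝ) (φ ψ : ℝ → 𝕜) (y : ℝ) : 𝕜 :=
  φ y * flux p s ψ y - ψ y * flux p s φ y

structure IsSolution (p q : ℝ → 𝕜) (s : Set ℝ) (ψ : ℝ → 𝕜) : Prop where
  differentiableOn : DifferentiableOn ℝ ψ s
  differentiableOn_flux : DifferentiableOn ℝ (flux p s ψ) s
  derivWithin_flux : ∀ y ∈ s, derivWithin (flux p s ψ) s y = q y * ψ y

theorem IsSolution.hasDerivWithinAt_flux (hψ : IsSolution p q s ψ) (hy : y ∈ s) :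
    HasDerivWithinAt (flux p s ψ) (q y * ψ y) s y :=
  hψ.derivWithin_flux y hy ▸ (hψ.differentiableOn_flux y hy).hasDerivWithinAt

theorem IsSolution.of_contDiffOn (hs : UniqueDiffOn ℝ s) (hp : DifferentiableOn ℝ p s)
    (hψ : ContDiffOn ℝ 2 ψ s) (heq : ∀ y ∈ s, derivWithin (flux p s ψ) s y = q y * ψ y) :
    IsSolution p q s ψ where
  differentiableOn := hψ.differentiableOn two_ne_zero
  differentiableOn_flux := hp.mul ((hψ.derivWithin hs le_rfl).differentiableOn one_ne_zero)
  derivWithin_flux := heq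

theorem IsSolution.hasDerivWithinAt_wronskian (hφ : IsSolution p q s φ) (hψ : IsSolution p q s ψ)
    (hy : y ∈ s) : HasDerivWithinAt (wronskian p s φ ψ) 0 s y := by
  refine (((hφ.differentiableOn y hy).hasDerivWithinAt.mul (hψ.hasDerivWithinAt_flux hy)).sub
    ((hψ.differentiableOn y hy).hasDerivWithinAt.mul (hφ.hasDerivWithinAt_flux hy))).congr_deriv ?_
  simp only [flux]
  ring

theorem IsSolution.wronskian_eq_left (hφ : IsSolution p q (Icc a b) φ)
    (hψ : IsSolution p q (Icc a b) ψ) (hy : y ∈ Icc a b) :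
    wronskian p (Icc a b) φ ψ y = wronskian p (Icc a b) φ ψ a :=
  eqOn_Icc_of_hasDerivWithinAt (fun _ hx => hφ.hasDerivWithinAt_wronskian hψ hx)
    (fun x _ => hasDerivWithinAt_const x _ _) rfl hy

theorem continuousOn_inv_mul_sq (hp : ContinuousOn p s) (hφ : ContinuousOn φ s)
    (hp0 : ∀ y ∈ s, p y ≠ 0) (hφ0 : ∀ y ∈ s, φ y ≠ 0) :
    ContinuousOn (fun t => (p t * φ t ^ 2)⁻¹) s :=
  (hp.mul (hφ.pow 2)).inv₀ fun t ht => mul_ne_zero (hp0 t ht) (pow_ne_zero 2 (hφ0 t ht))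

-- Reduction of order: `(ψ / φ)' = W / (p φ²)` with `W` constant.
theorem IsSolution.div_eq_add_wronskian_mul_integral (hφ : IsSolution p q (Icc a b) φ)
    (hψ : IsSolution p q (Icc a b) ψ) (hp : ContinuousOn p (Icc a b))
    (hp0 : ∀ y ∈ Icc a b, p y ≠ 0) (hφ0 : ∀ y ∈ Icc a b, φ y ≠ 0) (hy : y ∈ Icc a b) :
    ψ y / φ y = ψ a / φ a + wronskian p (Icc a b) φ ψ a * ∫ t in a..y, (p t * φ t ^ 2)⁻¹ := by
  set W := wronskian p (Icc a b) φ ψ a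
  have hcont := continuousOn_inv_mul_sq hp hφ.differentiableOn.continuousOn hp0 hφ0
  have hquot (x) (hx : x ∈ Icc a b) :
      HasDerivWithinAt (fun x => ψ x / φ x) (W * (p x * φ x ^ 2)⁻¹) (Icc a b) x := by
    refine ((hψ.differentiableOn x hx).hasDerivWithinAt.div
      (hφ.differentiableOn x hx).hasDerivWithinAt (hφ0 x hx)).congr_deriv ?_
    rw [show W = wronskian p (Icc a b) φ ψ x from (hφ.wronskian_eq_left hψ hx).symm]
    simp only [wronskian, flux]
    field_simp [hp0 x hx, hφ0 x hx]
  have hprim (x) (hx : x ∈ Icc a b) :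
      HasDerivWithinAt (fun x => ψ a / φ a + W * ∫ t in a..x, (p t * φ t ^ 2)⁻¹)
        (W * (p x * φ x ^ 2)⁻¹) (Icc a b) x :=
    ((hasDerivWithinAt_integral_Icc (hy.1.trans hy.2) hcont hx).const_mul W).const_add _
  exact eqOn_Icc_of_hasDerivWithinAt hquot hprim (by simp) hy

theorem IsSolution.integral_inv_mul_sq_eq_zero (hφ : IsSolution p q (Icc a b) φ)
    (hψ : IsSolution p q (Icc a b) ψ) (hp : ContinuousOn p (Icc a b))
    (hp0 : ∀ y ∈ Icc a b, p y ≠ 0) (hφ0 : ∀ y ∈ Icc a b, φ y ≠ 0) (ha : ψ a = 0) (hb : ψ b = 0)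
    (hψ0 : ∃ y ∈ Icc a b, ψ y ≠ 0) : ∫ t in a..b, (p t * φ t ^ 2)⁻¹ = 0 := by
  obtain ⟨y, hy, hψy⟩ := hψ0
  have hab : a ≤ b := hy.1.trans hy.2
  have hdiv {x} (hx : x ∈ Icc a b) := hφ.div_eq_add_wronskian_mul_integral hψ hp hp0 hφ0 hx
  have hWI := hdiv (right_mem_Icc.mpr hab)
  rw [ha, hb, zero_div, zero_div, zero_add, eq_comm, mul_eq_zero] at hWI
  refine hWI.resolve_left fun hW => hψy ?_
  simpa [ha, hW, hφ0 y hy] using hdiv hy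

theorem IsSolution.mul_integral (hφ : IsSolution p q (Icc a b) φ) (hab : a < b)
    (hp : ContinuousOn p (Icc a b)) (hp0 : ∀ y ∈ Icc a b, p y ≠ 0)
    (hφ0 : ∀ y ∈ Icc a b, φ y ≠ 0) :
    IsSolution p q (Icc a b) (fun y => φ y * ∫ t in a..y, (p t * φ t ^ 2)⁻¹) := by
  set g := fun y => ∫ t in a..y, (p t * φ t ^ 2)⁻¹
  have hg : ∀ y ∈ Icc a b, HasDerivWithinAt g (p y * φ y ^ 2)⁻¹ (Icc a b) y := fun y hy =>
    hasDerivWithinAt_integral_Icc hab.le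
      (continuousOn_inv_mul_sq hp hφ.differentiableOn.continuousOn hp0 hφ0) hy
  have hφ' : ∀ y ∈ Icc a b, HasDerivWithinAt φ (derivWithin φ (Icc a b) y) (Icc a b) y :=
    fun y hy => (hφ.differentiableOn y hy).hasDerivWithinAt
  have hflux : EqOn (flux p (Icc a b) (fun y => φ y * g y))
      (fun y => flux p (Icc a b) φ y * g y + (φ y)⁻¹) (Icc a b) := by
    intro y hy
    simp only [flux]
    rw [((hφ' y hy).fun_mul (hg y hy)).derivWithin (uniqueDiffOn_Icc hab y hy)]
    field_simp [hp0 y hy, hφ0 y hy]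
  have hderiv : ∀ y ∈ Icc a b, HasDerivWithinAt (flux p (Icc a b) (fun y => φ y * g y))
      (q y * (φ y * g y)) (Icc a b) y := by
    intro y hy
    refine ((((hφ.hasDerivWithinAt_flux hy).mul (hg y hy)).add
      ((hφ' y hy).inv (hφ0 y hy))).congr_deriv ?_).congr_of_mem hflux hy
    simp only [flux]
    field_simp [hp0 y hy, hφ0 y hy]
    ring
  exact
    { differentiableOn := hφ.differentiableOn.mul fun y hy => (hg y hy).differentiableWithinAt
      differentiableOn_flux := fun y hy => (hderiv y hy).differentiableWithinAt
      derivWithin_flux := fun y hy => (hderiv y hy).derivWithin (uniqueDiffOn_Icc hab y hy) }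

theorem exists_mul_integral_ne_zero (hab : a < b) (hp : ContinuousOn p (Icc a b))
    (hφ : ContinuousOn φ (Icc a b)) (hp0 : ∀ y ∈ Icc a b, p y ≠ 0)
    (hφ0 : ∀ y ∈ Icc a b, φ y ≠ 0) :
    ∃ y ∈ Icc a b, φ y * ∫ t in a..y, (p t * φ t ^ 2)⁻¹ ≠ 0 := by
  by_contra! h
  have ha : a ∈ Icc a b := left_mem_Icc.mpr hab.le
  have hg0 : ∀ y ∈ Icc a b, ∫ t in a..y, (p t * φ t ^ 2)⁻¹ = 0 := fun y hy =>
    (mul_eq_zero.mp (h y hy)).resolve_left (hφ0 y hy)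
  refine inv_ne_zero (mul_ne_zero (hp0 a ha) (pow_ne_zero 2 (hφ0 a ha))) ?_
  exact (uniqueDiffOn_Icc hab a ha).eq_deriv _
    (hasDerivWithinAt_integral_Icc hab.le (continuousOn_inv_mul_sq hp hφ hp0 hφ0) ha)
    ((hasDerivWithinAt_const a _ 0).congr_of_mem hg0 ha)

end SturmLiouville

theorem rayleigh_iff_sturmLiouville {K : Type*} [Field K] {w X m t d ψ : K} (hw : w ≠ 0) :
    w * X - w * m * t * ψ - d * ψ = 0 ↔ X = (m * t + d / w) * ψ := by
  constructor <;> intro h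
  · field_simp
    linear_combination h
  · rw [h]
    field_simp
    ring

open SturmLiouville in
theorem stmt4_general
    (u θ : ℝ → ℝ) (c0 : ℝ) (hc0 : 0 < c0)
    (hθ : ContDiff ℝ (⊤ : ℕ∞) θ)
    (hθc : ∀ y ∈ Icc (0:ℝ) 1, c0 ≤ θ y)
    (k : ℤ) (c : ℂ)
    (hc : c ∉ (fun y => ((u y : ℝ) : ℂ)) '' Icc (0:ℝ) 1)
    (φ : ℝ → ℂ)
    (hφreg : ContDiffOn ℝ 2 φ (Icc (0:ℝ) 1))
    (hφne : ∀ y ∈ Icc (0:ℝ) 1, φ y ≠ 0)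
    (hφeq : ∀ y ∈ Icc (0:ℝ) 1,
      (((u y : ℝ) : ℂ) - c) *
          derivWithin (fun z => (((θ z : ℝ) : ℂ))⁻¹ * derivWithin φ (Icc (0:ℝ) 1) z)
            (Icc (0:ℝ) 1) y
        - (((u y : ℝ) : ℂ) - c) * (k:ℂ)^2 * (((θ y : ℝ) : ℂ))⁻¹ * φ y
        - ((deriv (fun z => deriv u z / θ z) y : ℝ) : ℂ) * φ y = 0) :
    (∃ Φ : ℝ → ℂ,
        ContDiffOn ℝ 2 Φ (Icc (0:ℝ) 1) ∧ Φ 0 = 0 ∧ Φ 1 = 0 ∧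
        (∃ y ∈ Icc (0:ℝ) 1, Φ y ≠ 0) ∧
        (∀ y ∈ Icc (0:ℝ) 1,
          (((u y : ℝ) : ℂ) - c) *
              derivWithin (fun z => (((θ z : ℝ) : ℂ))⁻¹ * derivWithin Φ (Icc (0:ℝ) 1) z)
                (Icc (0:ℝ) 1) y
            - (((u y : ℝ) : ℂ) - c) * (k:ℂ)^2 * (((θ y : ℝ) : ℂ))⁻¹ * Φ y
            - ((deriv (fun z => deriv u z / θ z) y : ℝ) : ℂ) * Φ y = 0))
      ↔ (∫ z in (0:ℝ)..1, ((θ z : ℝ) : ℂ) / (φ z)^2) = 0 := by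
  set p : ℝ → ℂ := fun z => ((θ z : ℝ) : ℂ)⁻¹
  set q : ℝ → ℂ := fun y => (k : ℂ) ^ 2 * ((θ y : ℝ) : ℂ)⁻¹
    + ((deriv (fun z => deriv u z / θ z) y : ℝ) : ℂ) / (((u y : ℝ) : ℂ) - c)
  have h01 : (0 : ℝ) < 1 := one_pos
  have huc : ∀ y ∈ Icc (0:ℝ) 1, ((u y : ℝ) : ℂ) - c ≠ 0 := fun y hy =>
    sub_ne_zero.mpr fun h => hc ⟨y, hy, h⟩
  have hθ0 : ∀ y ∈ Icc (0:ℝ) 1, ((θ y : ℝ) : ℂ) ≠ 0 := fun y hy =>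
    Complex.ofReal_ne_zero.mpr (hc0.trans_le (hθc y hy)).ne'
  have hp0 : ∀ y ∈ Icc (0:ℝ) 1, p y ≠ 0 := fun y hy => inv_ne_zero (hθ0 y hy)
  have hp : ContDiffOn ℝ 1 p (Icc 0 1) :=
    ((Complex.ofRealCLM.contDiff.comp hθ).of_le (by exact_mod_cast le_top)).contDiffOn.inv hθ0
  have hφsol : IsSolution p q (Icc 0 1) φ :=
    .of_contDiffOn (uniqueDiffOn_Icc h01) (hp.differentiableOn one_ne_zero) hφreg
      fun y hy => (rayleigh_iff_sturmLiouville (huc y hy)).mp (hφeq y hy)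
  have hintegrand (z : ℝ) : (p z * φ z ^ 2)⁻¹ = ((θ z : ℝ) : ℂ) / φ z ^ 2 := by
    simp only [p, mul_inv, inv_inv, div_eq_mul_inv]
  simp only [← hintegrand]
  constructor
  · rintro ⟨Φ, hΦreg, hΦ0, hΦ1, hΦne, hΦeq⟩
    have hΦsol : IsSolution p q (Icc 0 1) Φ :=
      .of_contDiffOn (uniqueDiffOn_Icc h01) (hp.differentiableOn one_ne_zero) hΦreg
        fun y hy => (rayleigh_iff_sturmLiouville (huc y hy)).mp (hΦeq y hy)
    exact hφsol.integral_inv_mul_sq_eq_zero hΦsol hp.continuousOn hp0 hφne hΦ0 hΦ1 hΦne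
  · intro hI
    have hw : ContDiffOn ℝ 1 (fun t => (p t * φ t ^ 2)⁻¹) (Icc 0 1) :=
      (hp.mul ((hφreg.of_le one_le_two).pow 2)).inv
        fun t ht => mul_ne_zero (hp0 t ht) (pow_ne_zero 2 (hφne t ht))
    exact ⟨fun y => φ y * ∫ t in (0:ℝ)..y, (p t * φ t ^ 2)⁻¹,
      hφreg.mul (contDiffOn_integral_Icc h01 hw),
      mul_eq_zero_of_right _ intervalIntegral.integral_same, mul_eq_zero_of_right _ hI,
      exists_mul_integral_ne_zero h01 hp.continuousOn hφreg.continuousOn hp0 hφne,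
      fun y hy => (rayleigh_iff_sturmLiouville (huc y hy)).mpr
        ((hφsol.mul_integral h01 hp.continuousOn hp0 hφne).derivWithin_flux y hy)⟩

/-- for `c ∉ u([0,1])` and a nowhere-vanishing solution `φ` of the homogeneous
distorted Rayleigh equation, a nontrivial Dirichlet solution exists iff `∫ θ/φ² = 0`. -/
theorem stmt4
    (u θ : ℝ → ℝ) (c0 : ℝ) (hc0 : 0 < c0)
    (hu : ContDiff ℝ (⊤ : ℕ∞) u) (hθ : ContDiff ℝ (⊤ : ℕ∞) θ)
    (hu' : ∀ y ∈ Icc (0:ℝ) 1, c0 ≤ deriv u y)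
    (hθc : ∀ y ∈ Icc (0:ℝ) 1, c0 ≤ θ y)
    (k : ℤ) (hk : k ≠ 0) (c : ℂ)
    (hc : c ∉ (fun y => ((u y : ℝ) : ℂ)) '' Icc (0:ℝ) 1)
    (φ : ℝ → ℂ)
    (hφreg : ContDiffOn ℝ 2 φ (Icc (0:ℝ) 1))
    (hφne : ∀ y ∈ Icc (0:ℝ) 1, φ y ≠ 0)
    (hφeq : ∀ y ∈ Icc (0:ℝ) 1,
      (((u y : ℝ) : ℂ) - c) *
          derivWithin (fun z => (((θ z : ℝ) : ℂ))⁻¹ * derivWithin φ (Icc (0:ℝ) 1) z)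
            (Icc (0:ℝ) 1) y
        - (((u y : ℝ) : ℂ) - c) * (k:ℂ)^2 * (((θ y : ℝ) : ℂ))⁻¹ * φ y
        - ((deriv (fun z => deriv u z / θ z) y : ℝ) : ℂ) * φ y = 0) :
    (∃ Φ : ℝ → ℂ,
        ContDiffOn ℝ 2 Φ (Icc (0:ℝ) 1) ∧ Φ 0 = 0 ∧ Φ 1 = 0 ∧
        (∃ y ∈ Icc (0:ℝ) 1, Φ y ≠ 0) ∧
        (∀ y ∈ Icc (0:ℝ) 1,
          (((u y : ℝ) : ℂ) - c) *
              derivWithin (fun z => (((θ z : ℝ) : ℂ))⁻¹ * derivWithin Φ (Icc (0:ℝ) 1) z)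
                (Icc (0:ℝ) 1) y
            - (((u y : ℝ) : ℂ) - c) * (k:ℂ)^2 * (((θ y : ℝ) : ℂ))⁻¹ * Φ y
            - ((deriv (fun z => deriv u z / θ z) y : ℝ) : ℂ) * Φ y = 0))
      ↔ (∫ z in (0:ℝ)..1, ((θ z : ℝ) : ℂ) / (φ z)^2) = 0 :=
  stmt4_general u θ c0 hc0 hθ hθc k c hc φ hφreg hφne hφeq
end

section
/- Let k be a nonzero integer and y' ∈ [0,1]. Suppose Φ : [0,1] → ℂ is a C² function, not identically zero, with Φ(0) = Φ(1) = 0, satisfying (u(y) − u(y')) [ ∂_y( θ(y)^{-1} ∂_y Φ(y) ) − k² θ(y)^{-1} Φ(y) ] = (u'/θ)'(y) Φ(y) for all y ∈ [0,1]. Then (u'/θ)'(y') = 0. -/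
/-!
Suppose `(u'/θ)'(y') ≠ 0`; then the equation at `y'` forces `Φ(y') = 0`. With `c = u(y')`, the
weighted Wronskian `G = ((u - c) Φ' - u' Φ) / θ` of `u - c` and `Φ` satisfies, by the equation,
`G' = k² (u - c) Φ / θ`. Hence `H = ⟪G, Φ⟫ / (u - c)` has
`H' = k² ‖Φ‖² / θ + θ ‖G‖² / (u - c)² ≥ 0` away from `y'`. It vanishes wherever `Φ` does, in
particular at `0`, `y'` and `1`, and it is continuous at `y'` because `Φ / (u - c)` stays bounded
there. So `H` is constant on `[0, y']` and on `[y', 1]`, whence `H' = 0` and `Φ = 0`.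
-/

open Set Filter Topology
open scoped RealInnerProductSpace

theorem eq_zero_of_hasDerivAt_nonneg_of_endpoints_eq {H H' : ℝ → ℝ} {a b : ℝ}
    (hH : ContinuousOn H (Icc a b)) (hH' : ∀ x ∈ Ioo a b, HasDerivAt H (H' x) x)
    (hH'_nonneg : ∀ x ∈ Ioo a b, 0 ≤ H' x) (hab : H a = H b) :
    ∀ x ∈ Ioo a b, H' x = 0 := by
  have hmono : MonotoneOn H (Icc a b) :=
    monotoneOn_of_hasDerivWithinAt_nonneg (convex_Icc a b) hH
      (by simpa only [interior_Icc] using fun x hx => (hH' x hx).hasDerivWithinAt)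
      (by simpa only [interior_Icc] using hH'_nonneg)
  have hconst : ∀ x ∈ Icc a b, H x = H a := fun x hx =>
    le_antisymm (hab ▸ hmono hx ⟨hx.1.trans hx.2, le_rfl⟩ hx.2)
      (hmono ⟨le_rfl, hx.1.trans hx.2⟩ hx hx.1)
  intro x hx
  refine (hH' x hx).unique ((hasDerivAt_const x (H a)).congr_of_eventuallyEq ?_)
  filter_upwards [Ioo_mem_nhds hx.1 hx.2] with z hz using hconst z (Ioo_subset_Icc_self hz)

theorem hasDerivWithinAt_wronskian_of_rayleigh {F : Type*} [NormedAddCommGroup F]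
    [NormedSpace ℝ F] {s : Set ℝ} {u q : ℝ → ℝ} {Φ P : ℝ → F} {u' q' θ c K y : ℝ} {Φ' P' : F}
    (hu : HasDerivWithinAt u u' s y) (hq : HasDerivWithinAt q q' s y)
    (hΦ : HasDerivWithinAt Φ Φ' s y) (hP : HasDerivWithinAt P P' s y)
    (hP_eq : θ • P y = Φ') (hq_eq : θ * q y = u')
    (hRayleigh : (u y - c) • (P' - (K / θ) • Φ y) = q' • Φ y) :
    HasDerivWithinAt (fun z => (u z - c) • P z - q z • Φ z)
      ((K * (u y - c) / θ) • Φ y) s y := by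
  refine (((hu.sub_const c).smul hP).sub (hq.smul hΦ)).congr_deriv ?_
  rw [← hRayleigh, ← hP_eq, ← hq_eq]
  module

theorem smul_wronskian_eq {F : Type*} [AddCommGroup F] [Module ℝ F] {P Φ' Φ : F}
    {u q u' θ : ℝ} (hP_eq : θ • P = Φ') (hq_eq : θ * q = u') :
    θ • (u • P - q • Φ) = u • Φ' - u' • Φ := by
  rw [← hP_eq, ← hq_eq]
  module

theorem differentiableWithinAt_ofReal_inv_mul {s : Set ℝ} {θ : ℝ → ℝ} {g : ℝ → ℂ} {y : ℝ}
    (hθ : DifferentiableAt ℝ θ y) (hθy : θ y ≠ 0) (hg : DifferentiableWithinAt ℝ g s y) :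
    DifferentiableWithinAt ℝ (fun z => ((θ z : ℝ) : ℂ)⁻¹ * g z) s y :=
  ((Complex.ofRealCLM.differentiableAt.comp y hθ).differentiableWithinAt.inv
    (by simpa using hθy)).mul hg

section

variable {E : Type*} [NormedAddCommGroup E] [InnerProductSpace ℝ E]

theorem hasDerivAt_inner_div_sub {u : ℝ → ℝ} {f G : ℝ → E} {u' θ c K y : ℝ} {F : E}
    (hu : HasDerivAt u u' y) (hf : HasDerivAt f F y)
    (hG : HasDerivAt G ((K * (u y - c) / θ) • f y) y)
    (hGF : θ • G y = (u y - c) • F - u' • f y) (hθ : θ ≠ 0) (hc : u y ≠ c) :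
    HasDerivAt (fun z => ⟪G z, f z⟫ / (u z - c))
      (K / θ * ‖f y‖ ^ 2 + θ * ‖G y‖ ^ 2 / (u y - c) ^ 2) y := by
  have hc' : u y - c ≠ 0 := sub_ne_zero.mpr hc
  have hGG : ⟪G y, F⟫ * (u y - c) - ⟪G y, f y⟫ * u' = θ * ‖G y‖ ^ 2 := by
    rw [← real_inner_self_eq_norm_sq, ← real_inner_smul_right, hGF, inner_sub_right,
      real_inner_smul_right, real_inner_smul_right]
    ring
  refine ((hG.inner ℝ hf).div (hu.sub_const c) hc').congr_deriv ?_
  rw [real_inner_smul_left, real_inner_self_eq_norm_sq, mul_div_assoc, ← hGG]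
  field_simp
  ring

theorem continuousWithinAt_inner_div_sub {s : Set ℝ} {u : ℝ → ℝ} {f G : ℝ → E} {u' y : ℝ} {F : E}
    (hu : HasDerivWithinAt u u' s y) (hu' : u' ≠ 0) (hf : HasDerivWithinAt f F s y)
    (hfy : f y = 0) (hG : ContinuousWithinAt G s y) (hGy : G y = 0) :
    ContinuousWithinAt (fun z => ⟪G z, f z⟫ / (u z - u y)) s y := by
  rw [← continuousWithinAt_sdiff_self]
  have hlim : Tendsto (fun z => ⟪G z, slope f y z⟫ / slope u y z) (𝓝[s \ {y}] y)
      (𝓝 (⟪G y, F⟫ / u')) :=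
    ((hG.mono sdiff_subset).tendsto.inner (hasDerivWithinAt_iff_tendsto_slope.mp hf)).div
      (hasDerivWithinAt_iff_tendsto_slope.mp hu) hu'
  rw [hGy, inner_zero_left, zero_div] at hlim
  simp only [ContinuousWithinAt, hfy, inner_zero_right, zero_div]
  refine hlim.congr' ?_
  filter_upwards [self_mem_nhdsWithin] with z hz
  have hz' : z - y ≠ 0 := sub_ne_zero.mpr hz.2
  rw [slope_def_module, slope_def_field, hfy, sub_zero, real_inner_smul_right]
  field_simp

theorem continuousOn_inner_div_sub {s : Set ℝ} {u u' : ℝ → ℝ} {f F G : ℝ → E} {y₀ : ℝ}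
    (hu : ∀ y ∈ s, HasDerivWithinAt u (u' y) s y) (hu' : u' y₀ ≠ 0)
    (hu_ne : ∀ y ∈ s, y ≠ y₀ → u y ≠ u y₀) (hf : ∀ y ∈ s, HasDerivWithinAt f (F y) s y)
    (hfy₀ : f y₀ = 0) (hG : ContinuousOn G s) (hGy₀ : G y₀ = 0) :
    ContinuousOn (fun z => ⟪G z, f z⟫ / (u z - u y₀)) s := by
  intro y hy
  rcases eq_or_ne y y₀ with rfl | hne
  · exact continuousWithinAt_inner_div_sub (hu y hy) hu' (hf y hy) hfy₀ (hG y hy) hGy₀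
  · exact ((hG y hy).inner (hf y hy).continuousWithinAt).div
      ((hu y hy).continuousWithinAt.sub continuousWithinAt_const)
      (sub_ne_zero.mpr (hu_ne y hy hne))

theorem eq_zero_of_wronskian_hasDerivWithinAt {u u' θ : ℝ → ℝ} {f F G : ℝ → E}
    {a b y₀ K : ℝ} (hy₀ : y₀ ∈ Icc a b) (hK : 0 < K)
    (hu : ∀ y ∈ Icc a b, HasDerivWithinAt u (u' y) (Icc a b) y)
    (hu' : ∀ y ∈ Icc a b, 0 < u' y) (hθ : ∀ y ∈ Icc a b, 0 < θ y)
    (hf : ∀ y ∈ Icc a b, HasDerivWithinAt f (F y) (Icc a b) y)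
    (hGF : ∀ y ∈ Icc a b, θ y • G y = (u y - u y₀) • F y - u' y • f y)
    (hG : ∀ y ∈ Icc a b, HasDerivWithinAt G ((K * (u y - u y₀) / θ y) • f y) (Icc a b) y)
    (ha : f a = 0) (hb : f b = 0) (hfy₀ : f y₀ = 0) :
    ∀ y ∈ Icc a b, f y = 0 := by
  set H : ℝ → ℝ := fun z => ⟪G z, f z⟫ / (u z - u y₀)
  set H' : ℝ → ℝ := fun z => K / θ z * ‖f z‖ ^ 2 + θ z * ‖G z‖ ^ 2 / (u z - u y₀) ^ 2
  have hu_mono : StrictMonoOn u (Icc a b) :=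
    strictMonoOn_of_hasDerivWithinAt_pos (convex_Icc a b)
      (fun y hy => (hu y hy).continuousWithinAt)
      (fun y hy => (hu y (interior_subset hy)).mono interior_subset)
      (fun y hy => hu' y (interior_subset hy))
  have hu_ne : ∀ y ∈ Icc a b, y ≠ y₀ → u y ≠ u y₀ := fun y hy hne h =>
    hne (hu_mono.injOn hy hy₀ h)
  have hGy₀ : G y₀ = 0 := by
    simpa [hfy₀, (hθ y₀ hy₀).ne'] using hGF y₀ hy₀
  have hH_cont : ContinuousOn H (Icc a b) :=
    continuousOn_inner_div_sub hu (hu' y₀ hy₀).ne' hu_ne hf hfy₀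
      (fun y hy => (hG y hy).continuousWithinAt) hGy₀
  have hH_deriv : ∀ y ∈ Ioo a b, y ≠ y₀ → HasDerivAt H (H' y) y := fun y hy hne =>
    have hI : Icc a b ∈ 𝓝 y := Icc_mem_nhds hy.1 hy.2
    have hy' : y ∈ Icc a b := Ioo_subset_Icc_self hy
    hasDerivAt_inner_div_sub ((hu y hy').hasDerivAt hI) ((hf y hy').hasDerivAt hI)
      ((hG y hy').hasDerivAt hI) (hGF y hy') (hθ y hy').ne' (hu_ne y hy' hne)
  have hH_zero : ∀ y, f y = 0 → H y = 0 := fun y hy => by simp [H, hy]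
  have hH'_nonneg : ∀ y ∈ Icc a b,
      0 ≤ K / θ y * ‖f y‖ ^ 2 ∧ 0 ≤ θ y * ‖G y‖ ^ 2 / (u y - u y₀) ^ 2 := fun y hy =>
    have := hθ y hy
    ⟨by positivity, by positivity⟩
  have hH'_zero : ∀ a' b', a ≤ a' → b' ≤ b → y₀ ∉ Ioo a' b' → H a' = 0 → H b' = 0 →
      ∀ y ∈ Ioo a' b', H' y = 0 := fun a' b' ha' hb' hy₀' ha'0 hb'0 =>
    have hsub : Icc a' b' ⊆ Icc a b := Icc_subset_Icc ha' hb'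
    eq_zero_of_hasDerivAt_nonneg_of_endpoints_eq (hH_cont.mono hsub)
      (fun y hy =>
        hH_deriv y ⟨ha'.trans_lt hy.1, hy.2.trans_le hb'⟩ (ne_of_mem_of_not_mem hy hy₀'))
      (fun y hy => add_nonneg (hH'_nonneg y (hsub (Ioo_subset_Icc_self hy))).1
        (hH'_nonneg y (hsub (Ioo_subset_Icc_self hy))).2)
      (ha'0.trans hb'0.symm)
  intro y hy
  obtain rfl | hya := eq_or_ne y a
  · exact ha
  obtain rfl | hyb := eq_or_ne y b
  · exact hb
  obtain rfl | hyy₀ := eq_or_ne y y₀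
  · exact hfy₀
  have hH'y : H' y = 0 := by
    obtain hlt | hgt := hyy₀.lt_or_gt
    · exact hH'_zero a y₀ le_rfl hy₀.2 right_notMem_Ioo (hH_zero a ha) (hH_zero y₀ hfy₀) y
        ⟨lt_of_le_of_ne hy.1 hya.symm, hlt⟩
    · exact hH'_zero y₀ b hy₀.1 le_rfl left_notMem_Ioo (hH_zero y₀ hfy₀) (hH_zero b hb) y
        ⟨hgt, lt_of_le_of_ne hy.2 hyb⟩
  have := (add_eq_zero_iff_of_nonneg (hH'_nonneg y hy).1 (hH'_nonneg y hy).2).mp hH'y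
  simpa [hK.ne', (hθ y hy).ne'] using this.1

end

/-- if `u(y')` is an embedded eigenvalue (there is a nontrivial Dirichlet
eigenfunction), then `(u'/θ)'(y') = 0`. -/
theorem stmt5
    (u θ : ℝ → ℝ) (c0 : ℝ) (hc0 : 0 < c0)
    (hu : ContDiff ℝ (⊤ : ℕ∞) u) (hθ : ContDiff ℝ (⊤ : ℕ∞) θ)
    (hu' : ∀ y ∈ Icc (0:ℝ) 1, c0 ≤ deriv u y)
    (hθc : ∀ y ∈ Icc (0:ℝ) 1, c0 ≤ θ y)
    (k : ℤ) (hk : k ≠ 0) (y' : ℝ) (hy' : y' ∈ Icc (0:ℝ) 1)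
    (Φ : ℝ → ℂ)
    (hΦreg : ContDiffOn ℝ 2 Φ (Icc (0:ℝ) 1))
    (hΦne : ∃ y ∈ Icc (0:ℝ) 1, Φ y ≠ 0)
    (hΦ0 : Φ 0 = 0) (hΦ1 : Φ 1 = 0)
    (hΦeq : ∀ y ∈ Icc (0:ℝ) 1,
      ((u y - u y' : ℝ) : ℂ) *
          (derivWithin (fun z => (((θ z : ℝ) : ℂ))⁻¹ * derivWithin Φ (Icc (0:ℝ) 1) z)
              (Icc (0:ℝ) 1) y
            - (k:ℂ)^2 * (((θ y : ℝ) : ℂ))⁻¹ * Φ y)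
        = ((deriv (fun z => deriv u z / θ z) y : ℝ) : ℂ) * Φ y) :
    deriv (fun z => deriv u z / θ z) y' = 0 := by
  by_contra hq
  set I := Icc (0:ℝ) 1
  set P : ℝ → ℂ := fun z => ((θ z : ℝ) : ℂ)⁻¹ * derivWithin Φ I z
  set q : ℝ → ℝ := fun z => deriv u z / θ z
  have hθ_pos : ∀ y ∈ I, 0 < θ y := fun y hy => hc0.trans_le (hθc y hy)
  have hu_deriv : ∀ y, HasDerivAt u (deriv u y) y :=
    fun y => (hu.differentiable (by simp) y).hasDerivAt
  have hΦ' : ∀ y ∈ I, HasDerivWithinAt Φ (derivWithin Φ I y) I y :=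
    fun y hy => (hΦreg.differentiableOn (by norm_num) y hy).hasDerivWithinAt
  have hP : ∀ y ∈ I, HasDerivWithinAt P (derivWithin P I y) I y := fun y hy =>
    (differentiableWithinAt_ofReal_inv_mul (hθ.differentiable (by simp) y) (hθ_pos y hy).ne'
      ((hΦreg.derivWithin (uniqueDiffOn_Icc one_pos) (by norm_num)).differentiableOn
        one_ne_zero y hy)).hasDerivWithinAt
  have hq' : ∀ y ∈ I, HasDerivAt q (deriv q y) y := fun y hy =>
    ((contDiff_infty_iff_deriv.mp hu).2.differentiable (by simp) y |>.div
      (hθ.differentiable (by simp) y) (hθ_pos y hy).ne').hasDerivAt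
  have hP_eq : ∀ y ∈ I, θ y • P y = derivWithin Φ I y := fun y hy => by
    have hθy : (θ y : ℂ) ≠ 0 := by exact_mod_cast (hθ_pos y hy).ne'
    simp only [P, Complex.real_smul]
    field_simp
  have hq_eq : ∀ y ∈ I, θ y * q y = deriv u y := fun y hy => mul_div_cancel₀ _ (hθ_pos y hy).ne'
  have hRayleigh : ∀ y ∈ I,
      (u y - u y') • (derivWithin P I y - ((k : ℝ) ^ 2 / θ y) • Φ y) = deriv q y • Φ y := by
    intro y hy
    have h := hΦeq y hy
    simp only [Complex.real_smul]
    push_cast at h ⊢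
    linear_combination h
  have hΦy' : Φ y' = 0 := by simpa [hq] using (hΦeq y' hy').symm
  obtain ⟨y, hy, hΦy⟩ := hΦne
  exact hΦy (eq_zero_of_wronskian_hasDerivWithinAt hy' (K := (k : ℝ) ^ 2) (by positivity)
    (fun y _ => (hu_deriv y).hasDerivWithinAt) (fun y hy => hc0.trans_le (hu' y hy)) hθ_pos hΦ'
    (fun y hy => smul_wronskian_eq (hP_eq y hy) (hq_eq y hy))
    (fun y hy => hasDerivWithinAt_wronskian_of_rayleigh (hu_deriv y).hasDerivWithinAt
      (hq' y hy).hasDerivWithinAt (hΦ' y hy) (hP y hy) (hP_eq y hy) (hq_eq y hy) (hRayleigh y hy))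
    hΦ0 hΦ1 hΦy' y hy)
end

section
/- Let k be a nonzero integer and c ∈ ℂ with Im c ≠ 0. Suppose the function (u'/θ)' does not change sign on [0,1] (i.e. (u'/θ)'(y) ≥ 0 for all y, or (u'/θ)'(y) ≤ 0 for all y). If Φ : [0,1] → ℂ is a C² function with Φ(0) = Φ(1) = 0 satisfying (u(y) − c) [ ∂_y( θ(y)^{-1} ∂_y Φ(y) ) − k² θ(y)^{-1} Φ(y) ] = (u'/θ)'(y) Φ(y) on [0,1], then Φ is identically zero. -/
/-!
Put `A = θ⁻¹ Φ'`. Multiplying the equation by `conj Φ / (u - c)` and integrating by parts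
(the boundary terms vanish since `Φ(0) = Φ(1) = 0`) gives
`∫ θ⁻¹ (|Φ'|² + k² |Φ|²) + ∫ (u'/θ)' |Φ|² / (u - c) = 0`.
The imaginary part of the second integrand is `Im c · (u'/θ)' |Φ|² / |u - c|²`, of constant sign,
so it vanishes identically; then the first integrand, which is nonnegative, vanishes too, and
`k ≠ 0` forces `Φ = 0`.
-/

open Set MeasureTheory ComplexConjugate

section IntervalIntegral

variable {a b : ℝ}

theorem eqOn_zero_of_nonneg_of_intervalIntegral_eq_zero (hab : a < b) {f : ℝ → ℝ}
    (hf : ContinuousOn f (Icc a b)) (hf0 : ∀ x ∈ Icc a b, 0 ≤ f x)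
    (hint : ∫ x in a..b, f x = 0) : EqOn f 0 (Icc a b) := by
  intro x hx
  by_contra! hfx
  have hpos := intervalIntegral.integral_lt_integral_of_continuousOn_of_le_of_exists_lt hab
    continuousOn_const hf (fun y hy => hf0 y (Ioc_subset_Icc_self hy))
    ⟨x, hx, (hf0 x hx).lt_of_ne hfx.symm⟩
  simp [hint] at hpos

theorem eqOn_zero_of_sign_of_intervalIntegral_eq_zero (hab : a < b) {f : ℝ → ℝ}
    (hf : ContinuousOn f (Icc a b))
    (hsign : (∀ x ∈ Icc a b, 0 ≤ f x) ∨ (∀ x ∈ Icc a b, f x ≤ 0))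
    (hint : ∫ x in a..b, f x = 0) : EqOn f 0 (Icc a b) := by
  rcases hsign with hnonneg | hnonpos
  · exact eqOn_zero_of_nonneg_of_intervalIntegral_eq_zero hab hf hnonneg hint
  · intro x hx
    simpa using eqOn_zero_of_nonneg_of_intervalIntegral_eq_zero hab hf.neg
      (fun y hy => neg_nonneg.mpr (hnonpos y hy)) (by simp [hint]) hx

theorem continuousOn_derivWithin_mul_conj_add (hab : a < b) {A Φ : ℝ → ℂ}
    (hA : ContDiffOn ℝ 1 A (Icc a b)) (hΦ : ContDiffOn ℝ 1 Φ (Icc a b)) :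
    ContinuousOn (fun y => derivWithin A (Icc a b) y * conj (Φ y)
      + A y * conj (derivWithin Φ (Icc a b) y)) (Icc a b) :=
  ((hA.continuousOn_derivWithin (uniqueDiffOn_Icc hab) le_rfl).mul hΦ.continuousOn.star).add
    (hA.continuousOn.mul (hΦ.continuousOn_derivWithin (uniqueDiffOn_Icc hab) le_rfl).star)

theorem intervalIntegral_derivWithin_mul_conj_add_eq_zero (hab : a < b) {A Φ : ℝ → ℂ}
    (hA : ContDiffOn ℝ 1 A (Icc a b)) (hΦ : ContDiffOn ℝ 1 Φ (Icc a b))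
    (ha : Φ a = 0) (hb : Φ b = 0) :
    ∫ y in a..b, (derivWithin A (Icc a b) y * conj (Φ y)
      + A y * conj (derivWithin Φ (Icc a b) y)) = 0 := by
  have hderiv : ∀ y ∈ Ioo a b, HasDerivWithinAt (fun z => A z * conj (Φ z))
      (derivWithin A (Icc a b) y * conj (Φ y) + A y * conj (derivWithin Φ (Icc a b) y))
      (Ioi y) y := by
    intro y hy
    have hAy := (hA.differentiableOn one_ne_zero y (Ioo_subset_Icc_self hy)).hasDerivWithinAt
    have hΦy := (hΦ.differentiableOn one_ne_zero y (Ioo_subset_Icc_self hy)).hasDerivWithinAt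
    exact ((hAy.mul hΦy.star).hasDerivAt (Icc_mem_nhds hy.1 hy.2)).hasDerivWithinAt
  rw [intervalIntegral.integral_eq_sub_of_hasDeriv_right_of_le hab.le
    (hA.continuousOn.mul hΦ.continuousOn.star) hderiv
    ((continuousOn_derivWithin_mul_conj_add hab hA hΦ).intervalIntegrable_of_Icc hab.le)]
  simp [ha, hb]

end IntervalIntegral

theorem rayleigh_mul_conj_add_eq {u θ d κ : ℝ} {c Φ ψ A' : ℂ} (huc : (u : ℂ) - c ≠ 0)
    (h : ((u : ℂ) - c) * (A' - (κ : ℂ) ^ 2 * (θ : ℂ)⁻¹ * Φ) = d * Φ) :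
    A' * conj Φ + (θ : ℂ)⁻¹ * ψ * conj ψ
      = ((θ⁻¹ * (Complex.normSq ψ + κ ^ 2 * Complex.normSq Φ) : ℝ) : ℂ)
        + ((d * Complex.normSq Φ : ℝ) : ℂ) * ((u : ℂ) - c)⁻¹ := by
  have hA' : A' = (κ : ℂ) ^ 2 * (θ : ℂ)⁻¹ * Φ + d * Φ * ((u : ℂ) - c)⁻¹ := by
    field_simp
    linear_combination h
  rw [hA']
  push_cast
  rw [← Complex.mul_conj, ← Complex.mul_conj]
  ring

theorem im_ofReal_add_ofReal_mul_inv_sub (r s u : ℝ) (c : ℂ) :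
    ((r : ℂ) + (s : ℂ) * ((u : ℂ) - c)⁻¹).im = s * c.im / Complex.normSq ((u : ℂ) - c) := by
  simp [Complex.inv_im, mul_div_assoc]

theorem eqOn_zero_of_intervalIntegral_ofReal_add_mul_inv_sub_eq_zero {a b : ℝ} (hab : a < b)
    {G : ℝ → ℂ} {r s u : ℝ → ℝ} {c : ℂ} (hc : c.im ≠ 0) (hG : ContinuousOn G (Icc a b))
    (hint : ∫ y in a..b, G y = 0)
    (hGeq : ∀ y ∈ Icc a b, G y = r y + s y * ((u y : ℂ) - c)⁻¹)
    (hr : ∀ y ∈ Icc a b, 0 ≤ r y)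
    (hs : (∀ y ∈ Icc a b, 0 ≤ s y) ∨ (∀ y ∈ Icc a b, s y ≤ 0)) :
    EqOn r 0 (Icc a b) := by
  have hGi : IntervalIntegrable G volume a b := hG.intervalIntegrable_of_Icc hab.le
  have hm : ∀ y, 0 < Complex.normSq ((u y : ℂ) - c) := fun y =>
    Complex.normSq_pos.mpr fun h => hc (by simpa using congrArg Complex.im h)
  have him : ∀ y ∈ Icc a b, (G y).im / c.im = s y / Complex.normSq ((u y : ℂ) - c) := by
    intro y hy
    rw [hGeq y hy, im_ofReal_add_ofReal_mul_inv_sub]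
    field_simp
  have hs0 : ∀ y ∈ Icc a b, s y = 0 := by
    have hq := eqOn_zero_of_sign_of_intervalIntegral_eq_zero hab
      ((Complex.continuous_im.comp_continuousOn' hG).div_const c.im) ?_ (by
        simpa [intervalIntegral.integral_div, hint, hc]
          using intervalIntegral.intervalIntegral_im hGi)
    · intro y hy
      simpa [him y hy, (hm y).ne'] using hq hy
    · refine hs.imp (fun hs y hy => ?_) (fun hs y hy => ?_) <;> rw [him y hy]
      exacts [div_nonneg (hs y hy) (hm y).le, div_nonpos_of_nonpos_of_nonneg (hs y hy) (hm y).le]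
  have hre : ∀ y ∈ Icc a b, (G y).re = r y := fun y hy => by simp [hGeq y hy, hs0 y hy]
  intro y hy
  rw [← hre y hy]
  refine eqOn_zero_of_nonneg_of_intervalIntegral_eq_zero hab
    (Complex.continuous_re.comp_continuousOn' hG) (fun z hz => hre z hz ▸ hr z hz) ?_ hy
  simpa [hint] using intervalIntegral.intervalIntegral_re hGi

theorem stmt6_general
    (u θ : ℝ → ℝ) (c0 : ℝ) (hc0 : 0 < c0)
    (hθ : ContDiff ℝ (⊤ : ℕ∞) θ)
    (hθc : ∀ y ∈ Icc (0:ℝ) 1, c0 ≤ θ y)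
    (k : ℤ) (hk : k ≠ 0) (c : ℂ) (hc : c.im ≠ 0)
    (hsign : (∀ y ∈ Icc (0:ℝ) 1, 0 ≤ deriv (fun z => deriv u z / θ z) y) ∨
             (∀ y ∈ Icc (0:ℝ) 1, deriv (fun z => deriv u z / θ z) y ≤ 0))
    (Φ : ℝ → ℂ)
    (hΦreg : ContDiffOn ℝ 2 Φ (Icc (0:ℝ) 1))
    (hΦ0 : Φ 0 = 0) (hΦ1 : Φ 1 = 0)
    (hΦeq : ∀ y ∈ Icc (0:ℝ) 1,
      (((u y : ℝ) : ℂ) - c) *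
          (derivWithin (fun z => (((θ z : ℝ) : ℂ))⁻¹ * derivWithin Φ (Icc (0:ℝ) 1) z)
              (Icc (0:ℝ) 1) y
            - (k:ℂ)^2 * (((θ y : ℝ) : ℂ))⁻¹ * Φ y)
        = ((deriv (fun z => deriv u z / θ z) y : ℝ) : ℂ) * Φ y) :
    ∀ y ∈ Icc (0:ℝ) 1, Φ y = 0 := by
  set I := Icc (0:ℝ) 1
  have hθpos : ∀ y ∈ I, 0 < θ y := fun y hy => hc0.trans_le (hθc y hy)
  have hΦ : ContDiffOn ℝ 1 Φ I := hΦreg.of_le one_le_two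
  have hA : ContDiffOn ℝ 1 (fun z => ((θ z : ℝ) : ℂ)⁻¹ * derivWithin Φ I z) I :=
    ((Complex.ofRealCLM.contDiff.comp hθ).contDiffOn.of_le (by exact_mod_cast le_top) |>.inv
      fun y hy => Complex.ofReal_ne_zero.mpr (hθpos y hy).ne').mul
      (hΦreg.derivWithin (uniqueDiffOn_Icc one_pos) (by norm_num))
  have henergy := eqOn_zero_of_intervalIntegral_ofReal_add_mul_inv_sub_eq_zero one_pos hc
    (continuousOn_derivWithin_mul_conj_add one_pos hA hΦ)
    (intervalIntegral_derivWithin_mul_conj_add_eq_zero one_pos hA hΦ hΦ0 hΦ1)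
    (r := fun y => (θ y)⁻¹
      * (Complex.normSq (derivWithin Φ I y) + (k : ℝ) ^ 2 * Complex.normSq (Φ y)))
    (s := fun y => deriv (fun z => deriv u z / θ z) y * Complex.normSq (Φ y))
    (fun y hy => rayleigh_mul_conj_add_eq (u := u y) (κ := k)
      (fun h => hc (by simpa using congrArg Complex.im h))
      (by rw [Complex.ofReal_intCast]; exact hΦeq y hy))
    (fun y hy => mul_nonneg (inv_nonneg.mpr (hθpos y hy).le)
      (add_nonneg (Complex.normSq_nonneg _) (mul_nonneg (sq_nonneg _) (Complex.normSq_nonneg _))))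
    (hsign.imp (fun h y hy => mul_nonneg (h y hy) (Complex.normSq_nonneg _))
      (fun h y hy => mul_nonpos_of_nonpos_of_nonneg (h y hy) (Complex.normSq_nonneg _)))
  intro y hy
  have hsum := (mul_eq_zero.mp (henergy hy)).resolve_left (inv_ne_zero (hθpos y hy).ne')
  have hk2 : (0 : ℝ) < (k : ℝ) ^ 2 := by positivity
  have hnorm : Complex.normSq (Φ y) = 0 := by
    nlinarith [Complex.normSq_nonneg (derivWithin Φ I y), Complex.normSq_nonneg (Φ y)]
  exact Complex.normSq_eq_zero.mp hnorm

/-- if `Im c ≠ 0` and `(u'/θ)'` does not change sign on `[0,1]`,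
then the only Dirichlet solution of the distorted Rayleigh equation is the zero function. -/
theorem stmt6
    (u θ : ℝ → ℝ) (c0 : ℝ) (hc0 : 0 < c0)
    (hu : ContDiff ℝ (⊤ : ℕ∞) u) (hθ : ContDiff ℝ (⊤ : ℕ∞) θ)
    (hu' : ∀ y ∈ Icc (0:ℝ) 1, c0 ≤ deriv u y)
    (hθc : ∀ y ∈ Icc (0:ℝ) 1, c0 ≤ θ y)
    (k : ℤ) (hk : k ≠ 0) (c : ℂ) (hc : c.im ≠ 0)
    (hsign : (∀ y ∈ Icc (0:ℝ) 1, 0 ≤ deriv (fun z => deriv u z / θ z) y) ∨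
             (∀ y ∈ Icc (0:ℝ) 1, deriv (fun z => deriv u z / θ z) y ≤ 0))
    (Φ : ℝ → ℂ)
    (hΦreg : ContDiffOn ℝ 2 Φ (Icc (0:ℝ) 1))
    (hΦ0 : Φ 0 = 0) (hΦ1 : Φ 1 = 0)
    (hΦeq : ∀ y ∈ Icc (0:ℝ) 1,
      (((u y : ℝ) : ℂ) - c) *
          (derivWithin (fun z => (((θ z : ℝ) : ℂ))⁻¹ * derivWithin Φ (Icc (0:ℝ) 1) z)
              (Icc (0:ℝ) 1) y
            - (k:ℂ)^2 * (((θ y : ℝ) : ℂ))⁻¹ * Φ y)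
        = ((deriv (fun z => deriv u z / θ z) y : ℝ) : ℂ) * Φ y) :
    ∀ y ∈ Icc (0:ℝ) 1, Φ y = 0 :=
  stmt6_general u θ c0 hc0 hθ hθc k hk c hc hsign Φ hΦreg hΦ0 hΦ1 hΦeq
end

section
/- Let k be a nonzero integer. There exists a unique C² function 𝔮_α : [α,β] → ℝ with 𝔮_α(α) = 1 and 𝔮_α'(α) = 0 solving (h1 𝔮_α')' = k² h2 𝔮_α on [α,β]; it satisfies 𝔮_α(v) ≥ 1 and 𝔮_α'(v) ≥ 0 for all v ∈ [α,β], and the integral equation 𝔮_α(v) = 1 + k² ∫_α^v h1(v')^{-1} ∫_α^{v'} h2(v'') 𝔮_α(v'') dv'' dv'. Likewise there exists a unique C² solution 𝔮_β with 𝔮_β(β) = 1 and 𝔮_β'(β) = 0, satisfying 𝔮_β ≥ 1 and 𝔮_β' ≤ 0 on [α,β]. Moreover, the Wronskian satisfies h1(v) ( 𝔮_α(v) 𝔮_β'(v) − 𝔮_α'(v) 𝔮_β(v) ) = h1(α) 𝔮_β'(α) = − h1(β) 𝔮_α'(β) < 0 for all v ∈ [α,β]. -/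
/-!
With `P = h1 q'` the equation becomes the linear first-order system `q' = P / h1`,
`P' = K h2 q` (`K = k²`), whose right-hand side is Lipschitz in `(q, P)` uniformly on `[α, β]`.
Some iterate of the Picard map is a contraction for the sup metric, which gives a solution with
any initial value at any `t₀ ∈ [α, β]`; uniqueness is Grönwall.

For the solution with `q t₀ = 1`, `P t₀ = 0`, the product `q P` has derivative
`P² / h1 + K h2 q² ≥ 0`, so it has the sign of `t - t₀`; so does `(q²)' = 2 q P / h1`, hence `q²`
is minimal at `t₀`, `q ≥ 1` by connectedness, and `P = (q P) / q` has the sign of `t - t₀`.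
The Wronskian `qa Pb - Pa qb` has zero derivative, and `Pb' = K h2 qb > 0` gives
`Pb α < Pb β = 0`.
-/

open Set MeasureTheory Function
open scoped NNReal Nat

section RealCalculus

variable {f f' : ℝ → ℝ} {a b t₀ : ℝ}

theorem contDiffOn_succ_of_hasDerivWithinAt {s : Set ℝ} {n : ℕ} (hs : UniqueDiffOn ℝ s)
    (hf : ∀ t ∈ s, HasDerivWithinAt f (f' t) s t) (hf' : ContDiffOn ℝ n f' s) :
    ContDiffOn ℝ (n + 1) f s :=
  (contDiffOn_succ_iff_derivWithin hs).2 ⟨fun t ht ↦ (hf t ht).differentiableWithinAt, nofun,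
    hf'.congr fun t ht ↦ (hf t ht).derivWithin (hs t ht)⟩

theorem integral_eq_sub_of_forall_mem_Icc_hasDerivWithinAt
    (hf : ∀ t ∈ Icc a b, HasDerivWithinAt f (f' t) (Icc a b) t) (hf' : ContinuousOn f' (Icc a b))
    {x y : ℝ} (hx : x ∈ Icc a b) (hy : y ∈ Icc a b) : ∫ t in x..y, f' t = f y - f x := by
  have hsub : uIcc x y ⊆ Icc a b := uIcc_subset_Icc hx hy
  refine intervalIntegral.integral_eq_sub_of_hasDeriv_right
    ((HasDerivWithinAt.continuousOn hf).mono hsub) (fun t ht ↦ ?_)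
    ((hf'.mono hsub).intervalIntegrable)
  have ht' : t ∈ Ioo a b := ⟨(le_min hx.1 hy.1).trans_lt ht.1, ht.2.trans_le (max_le hx.2 hy.2)⟩
  exact ((hf t (Ioo_subset_Icc_self ht')).hasDerivAt (Icc_mem_nhds ht'.1 ht'.2)).hasDerivWithinAt

theorem monotoneOn_Icc_of_hasDerivWithinAt_nonneg
    (hf : ∀ t ∈ Icc a b, HasDerivWithinAt f (f' t) (Icc a b) t) (hf' : ∀ t ∈ Ioo a b, 0 ≤ f' t) :
    MonotoneOn f (Icc a b) := by
  refine monotoneOn_of_hasDerivWithinAt_nonneg (convex_Icc a b) (HasDerivWithinAt.continuousOn hf)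
    ?_ (by rwa [interior_Icc])
  rw [interior_Icc]
  exact fun t ht ↦ (hf t (Ioo_subset_Icc_self ht)).mono Ioo_subset_Icc_self

theorem antitoneOn_Icc_of_hasDerivWithinAt_nonpos
    (hf : ∀ t ∈ Icc a b, HasDerivWithinAt f (f' t) (Icc a b) t) (hf' : ∀ t ∈ Ioo a b, f' t ≤ 0) :
    AntitoneOn f (Icc a b) := by
  refine antitoneOn_of_hasDerivWithinAt_nonpos (convex_Icc a b) (HasDerivWithinAt.continuousOn hf)
    ?_ (by rwa [interior_Icc])
  rw [interior_Icc]
  exact fun t ht ↦ (hf t (Ioo_subset_Icc_self ht)).mono Ioo_subset_Icc_self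

theorem strictMonoOn_Icc_of_hasDerivWithinAt_pos
    (hf : ∀ t ∈ Icc a b, HasDerivWithinAt f (f' t) (Icc a b) t) (hf' : ∀ t ∈ Ioo a b, 0 < f' t) :
    StrictMonoOn f (Icc a b) := by
  refine strictMonoOn_of_hasDerivWithinAt_pos (convex_Icc a b) (HasDerivWithinAt.continuousOn hf)
    ?_ (by rwa [interior_Icc])
  rw [interior_Icc]
  exact fun t ht ↦ (hf t (Ioo_subset_Icc_self ht)).mono Ioo_subset_Icc_self

theorem isMinOn_Icc_of_hasDerivWithinAt
    (hf : ∀ t ∈ Icc a b, HasDerivWithinAt f (f' t) (Icc a b) t) (ht₀ : t₀ ∈ Icc a b)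
    (hf' : ∀ t ∈ Icc a b, 0 ≤ (t - t₀) * f' t) : IsMinOn f (Icc a b) t₀ := by
  intro t ht
  rcases le_total t₀ t with h | h
  · refine monotoneOn_Icc_of_hasDerivWithinAt_nonneg (f' := f') (fun u hu ↦ ?_) (fun u hu ↦ ?_)
      (left_mem_Icc.2 (h.trans ht.2)) ⟨h, ht.2⟩ h
    · exact (hf u ⟨ht₀.1.trans hu.1, hu.2⟩).mono (Icc_subset_Icc_left ht₀.1)
    · exact nonneg_of_mul_nonneg_right (hf' u ⟨ht₀.1.trans hu.1.le, hu.2.le⟩) (sub_pos.2 hu.1)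
  · refine antitoneOn_Icc_of_hasDerivWithinAt_nonpos (f' := f') (fun u hu ↦ ?_) (fun u hu ↦ ?_)
      ⟨ht.1, h⟩ (right_mem_Icc.2 (ht.1.trans h)) h
    · exact (hf u ⟨hu.1, hu.2.trans ht₀.2⟩).mono (Icc_subset_Icc_right ht₀.2)
    · exact nonpos_of_mul_nonneg_right (hf' u ⟨hu.1.le, hu.2.le.trans ht₀.2⟩) (sub_neg.2 hu.2)

end RealCalculus

theorem IsPreconnected.one_le_of_one_le_sq {X : Type*} [TopologicalSpace X] {s : Set X}
    {f : X → ℝ} {x₀ : X} (hs : IsPreconnected s) (hf : ContinuousOn f s) (hx₀ : x₀ ∈ s)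
    (h₀ : 0 ≤ f x₀) (hsq : ∀ x ∈ s, 1 ≤ f x ^ 2) : ∀ x ∈ s, 1 ≤ f x := by
  intro x hx
  by_contra! hlt
  have hneg : f x ≤ 0 := by nlinarith [hsq x hx]
  obtain ⟨y, hy, hy₀⟩ := hs.intermediate_value hx hx₀ hf ⟨hneg, h₀⟩
  have := hsq y hy
  norm_num [hy₀] at this


section ODE

variable {E : Type*} [NormedAddCommGroup E] [NormedSpace ℝ E] {a b t₀ : ℝ} {K : ℝ≥0}

theorem ODE_solution_unique_of_mem_Icc_of_hasDerivWithinAt {v : ℝ → E → E} {f g : ℝ → E}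
    (hv : ∀ t ∈ Icc a b, LipschitzWith K (v t)) (ht₀ : t₀ ∈ Icc a b)
    (hf : ∀ t ∈ Icc a b, HasDerivWithinAt f (v t (f t)) (Icc a b) t)
    (hg : ∀ t ∈ Icc a b, HasDerivWithinAt g (v t (g t)) (Icc a b) t) (heq : f t₀ = g t₀) :
    EqOn f g (Icc a b) := by
  have hIci {h : ℝ → E} (hh : ∀ t ∈ Icc a b, HasDerivWithinAt h (v t (h t)) (Icc a b) t) {t : ℝ}
      (ht : t ∈ Ico a b) : HasDerivWithinAt h (v t (h t)) (Ici t) t :=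
    (hh t (Ico_subset_Icc_self ht)).mono_of_mem_nhdsWithin (Icc_mem_nhdsGE_of_mem ht)
  have hIic {h : ℝ → E} (hh : ∀ t ∈ Icc a b, HasDerivWithinAt h (v t (h t)) (Icc a b) t) {t : ℝ}
      (ht : t ∈ Ioc a b) : HasDerivWithinAt h (v t (h t)) (Iic t) t :=
    (hh t (Ioc_subset_Icc_self ht)).mono_of_mem_nhdsWithin (Icc_mem_nhdsLE_of_mem ht)
  have hfc := HasDerivWithinAt.continuousOn hf
  have hgc := HasDerivWithinAt.continuousOn hg
  have hleft : Icc a t₀ ⊆ Icc a b := Icc_subset_Icc_right ht₀.2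
  have hright : Icc t₀ b ⊆ Icc a b := Icc_subset_Icc_left ht₀.1
  rw [← Icc_union_Icc_eq_Icc ht₀.1 ht₀.2]
  refine EqOn.union ?_ ?_
  · exact ODE_solution_unique_of_mem_Icc_left (s := fun _ ↦ univ)
      (fun t ht ↦ (hv t (hleft (Ioc_subset_Icc_self ht))).lipschitzOnWith) (hfc.mono hleft)
      (fun t ht ↦ hIic hf ⟨ht.1, ht.2.trans ht₀.2⟩) (fun _ _ ↦ mem_univ _) (hgc.mono hleft)
      (fun t ht ↦ hIic hg ⟨ht.1, ht.2.trans ht₀.2⟩) (fun _ _ ↦ mem_univ _) heq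
  · exact ODE_solution_unique_of_mem_Icc_right (s := fun _ ↦ univ)
      (fun t ht ↦ (hv t (hright (Ico_subset_Icc_self ht))).lipschitzOnWith) (hfc.mono hright)
      (fun t ht ↦ hIci hf ⟨ht₀.1.trans ht.1, ht.2⟩) (fun _ _ ↦ mem_univ _) (hgc.mono hright)
      (fun t ht ↦ hIci hg ⟨ht₀.1.trans ht.1, ht.2⟩) (fun _ _ ↦ mem_univ _) heq

variable [CompleteSpace E] {f : ℝ → E → E}

noncomputable def picardStep (hab : a ≤ b) (ht₀ : t₀ ∈ Icc a b)
    (hf : ContinuousOn (uncurry f) (Icc a b ×ˢ univ)) (x₀ : E) (γ : C(Icc a b, E)) :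
    C(Icc a b, E) where
  toFun t := ODE.picard f t₀ x₀ (IccExtend hab γ) t
  continuous_toFun := continuousOn_iff_continuous_domRestrict.1 <| HasDerivWithinAt.continuousOn
    fun _ ↦ ODE.hasDerivWithinAt_picard_Icc ht₀ hf
      (γ.continuous.Icc_extend' (f := γ)).continuousOn (fun _ _ ↦ mem_univ _) x₀

lemma picardStep_apply (hab : a ≤ b) (ht₀ : t₀ ∈ Icc a b)
    (hf : ContinuousOn (uncurry f) (Icc a b ×ˢ univ)) (x₀ : E) (γ : C(Icc a b, E))
    (t : Icc a b) :
    picardStep hab ht₀ hf x₀ γ t = x₀ + ∫ τ in t₀..t, f τ (IccExtend hab γ τ) := rfl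

lemma dist_iterate_picardStep_apply_le (hab : a ≤ b) (ht₀ : t₀ ∈ Icc a b)
    (hf : ContinuousOn (uncurry f) (Icc a b ×ˢ univ)) (hK : ∀ t ∈ Icc a b, LipschitzWith K (f t))
    (x₀ : E) (γ δ : C(Icc a b, E)) (n : ℕ) (t : Icc a b) :
    dist ((picardStep hab ht₀ hf x₀)^[n] γ t) ((picardStep hab ht₀ hf x₀)^[n] δ t) ≤
      (K * |(t : ℝ) - t₀|) ^ n / n ! * dist γ δ := by
  induction n generalizing t with
  | zero => simpa using ContinuousMap.dist_apply_le_dist t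
  | succ n ih =>
    set T := picardStep hab ht₀ hf x₀
    have hsub : uIcc t₀ t ⊆ Icc a b := uIcc_subset_Icc ht₀ t.2
    have hint (γ : C(Icc a b, E)) :
        IntervalIntegrable (fun τ ↦ f τ (IccExtend hab γ τ)) volume t₀ t :=
      (ODE.continuousOn_comp hf (γ.continuous.Icc_extend' (f := γ)).continuousOn
        (mapsTo_univ _ _) |>.mono hsub).intervalIntegrable
    rw [iterate_succ_apply', iterate_succ_apply', dist_eq_norm, picardStep_apply,
      picardStep_apply, add_sub_add_left_eq_sub, ← intervalIntegral.integral_sub (hint _) (hint _)]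
    calc _ ≤ |∫ τ in t₀..t, K ^ (n + 1) * |τ - t₀| ^ n / n ! * dist γ δ| := by
          refine intervalIntegral.norm_integral_le_abs_of_norm_le ?_
            (Continuous.intervalIntegrable (by fun_prop) _ _)
          filter_upwards [ae_restrict_mem measurableSet_uIoc] with τ hτ
          have hτ' : τ ∈ Icc a b := hsub (uIoc_subset_uIcc hτ)
          rw [← dist_eq_norm, IccExtend_of_mem _ _ hτ', IccExtend_of_mem _ _ hτ']
          calc _ ≤ K * dist ((T^[n]) γ ⟨τ, hτ'⟩) ((T^[n]) δ ⟨τ, hτ'⟩) :=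
                (hK τ hτ').dist_le_mul _ _
            _ ≤ K * ((K * |τ - t₀|) ^ n / n ! * dist γ δ) := by gcongr; exact ih ⟨τ, hτ'⟩
            _ = _ := by ring
      _ = (K * |(t : ℝ) - t₀|) ^ (n + 1) / (n + 1) ! * dist γ δ := by
          rw [intervalIntegral.integral_mul_const, intervalIntegral.integral_div,
            intervalIntegral.integral_const_mul, abs_mul, abs_div, abs_mul,
            intervalIntegral.abs_intervalIntegral_eq, integral_pow_abs_sub_uIoc]
          simp only [abs_of_nonneg (by positivity : (0 : ℝ) ≤ K ^ (n + 1)), abs_div, abs_pow,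
            abs_abs, Nat.abs_cast, abs_dist, Nat.factorial_succ, Nat.cast_mul, mul_pow]
          rw [abs_of_nonneg (by positivity : (0 : ℝ) ≤ n + 1)]
          push_cast
          field_simp

theorem exists_eq_forall_mem_Icc_hasDerivWithinAt_of_lipschitzWith (hab : a ≤ b)
    (ht₀ : t₀ ∈ Icc a b) (hf : ∀ x, ContinuousOn (f · x) (Icc a b))
    (hK : ∀ t ∈ Icc a b, LipschitzWith K (f t)) (x₀ : E) :
    ∃ γ : ℝ → E, γ t₀ = x₀ ∧ ∀ t ∈ Icc a b, HasDerivWithinAt γ (f t (γ t)) (Icc a b) t := by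
  have hf' : ContinuousOn (uncurry f) (Icc a b ×ˢ univ) :=
    continuousOn_prod_of_continuousOn_lipschitzOnWith' _ K
      (fun t ht ↦ (hK t ht).lipschitzOnWith) (fun x _ ↦ hf x)
  set T := picardStep hab ht₀ hf' x₀
  -- `T` itself need not contract, but `T^[n]` does since `(K (b - a)) ^ n / n! → 0`.
  obtain ⟨n, hn⟩ := FloorSemiring.tendsto_pow_div_factorial_atTop (K * (b - a))
    |>.eventually (gt_mem_nhds zero_lt_one) |>.exists
  have hba : 0 ≤ b - a := sub_nonneg.2 hab
  have hT : ContractingWith ⟨(K * (b - a)) ^ n / n !, by positivity⟩ (T^[n]) := by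
    refine ⟨hn, LipschitzWith.of_dist_le_mul fun γ δ ↦ ?_⟩
    change _ ≤ (K * (b - a)) ^ n / n ! * dist γ δ
    rw [ContinuousMap.dist_le (by positivity)]
    refine fun t ↦ (dist_iterate_picardStep_apply_le hab ht₀ hf' hK x₀ γ δ n t).trans ?_
    have : |(t : ℝ) - t₀| ≤ b - a := abs_sub_le_of_le_of_le t.2.1 t.2.2 ht₀.1 ht₀.2
    gcongr
  have : Nonempty C(Icc a b, E) := ⟨ContinuousMap.const _ x₀⟩
  set γ := hT.fixedPoint (T^[n])
  have hγ : T γ = γ := hT.isFixedPt_fixedPoint_iterate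
  have hpicard : EqOn (IccExtend hab γ) (ODE.picard f t₀ x₀ (IccExtend hab γ)) (Icc a b) :=
    fun t ht ↦ by
      rw [IccExtend_of_mem _ _ ht]
      exact (DFunLike.congr_fun hγ ⟨t, ht⟩).symm
  refine ⟨IccExtend hab γ, by rw [hpicard ht₀, ODE.picard_apply₀], fun t ht ↦ ?_⟩
  exact (ODE.hasDerivWithinAt_picard_Icc ht₀ hf' (γ.continuous.Icc_extend' (f := γ)).continuousOn
    (fun _ _ ↦ mem_univ _) x₀ ht).congr hpicard (hpicard ht)

end ODE

noncomputable def flux (h1 : ℝ → ℝ) (s : Set ℝ) (q : ℝ → ℝ) (t : ℝ) : ℝ :=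
  h1 t * derivWithin q s t

def IsSturmLiouvilleSolution (h1 h2 : ℝ → ℝ) (K : ℝ) (s : Set ℝ) (q : ℝ → ℝ) : Prop :=
  ContDiffOn ℝ 2 q s ∧ ∀ t ∈ s, derivWithin (flux h1 s q) s t = K * h2 t * q t

-- `(Q, P)` plays the role of `(q, flux h1 s q)`.
def SolvesSturmLiouvilleSystem (h1 h2 : ℝ → ℝ) (K : ℝ) (s : Set ℝ) (Q P : ℝ → ℝ) : Prop :=
  ∀ t ∈ s, HasDerivWithinAt Q (P t / h1 t) s t ∧ HasDerivWithinAt P (K * h2 t * Q t) s t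

noncomputable def sturmLiouvilleField (h1 h2 : ℝ → ℝ) (K t : ℝ) (p : ℝ × ℝ) : ℝ × ℝ :=
  (p.2 / h1 t, K * h2 t * p.1)

section SturmLiouville

variable {h1 h2 : ℝ → ℝ} {K a b t₀ : ℝ} {s : Set ℝ} {q Q P : ℝ → ℝ}

lemma lipschitzWith_sturmLiouvilleField {t : ℝ} {L : ℝ≥0} (h1t : |(h1 t)⁻¹| ≤ L)
    (h2t : |K * h2 t| ≤ L) : LipschitzWith L (sturmLiouvilleField h1 h2 K t) := by
  refine LipschitzWith.of_dist_le_mul fun p p' ↦ ?_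
  simp only [sturmLiouvilleField, Prod.dist_eq, Real.dist_eq]
  refine max_le ?_ ?_
  · calc |p.2 / h1 t - p'.2 / h1 t| = |(h1 t)⁻¹| * |p.2 - p'.2| := by rw [← abs_mul]; ring_nf
      _ ≤ L * max |p.1 - p'.1| |p.2 - p'.2| := by gcongr; exact le_max_right _ _
  · calc |K * h2 t * p.1 - K * h2 t * p'.1| = |K * h2 t| * |p.1 - p'.1| := by
          rw [← abs_mul, mul_sub]
      _ ≤ L * max |p.1 - p'.1| |p.2 - p'.2| := by gcongr; exact le_max_left _ _

lemma exists_forall_lipschitzWith_sturmLiouvilleField (hh1 : ContinuousOn h1 (Icc a b))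
    (hh1₀ : ∀ t ∈ Icc a b, h1 t ≠ 0) (hh2 : ContinuousOn h2 (Icc a b)) :
    ∃ L : ℝ≥0, ∀ t ∈ Icc a b, LipschitzWith L (sturmLiouvilleField h1 h2 K t) := by
  obtain ⟨C, hC⟩ := isCompact_Icc.exists_bound_of_continuousOn
    ((hh1.inv₀ hh1₀).prodMk (continuousOn_const.mul hh2) :
      ContinuousOn (fun t ↦ ((h1 t)⁻¹, K * h2 t)) _)
  refine ⟨C.toNNReal, fun t ht ↦ lipschitzWith_sturmLiouvilleField ?_ ?_⟩ <;>
  refine le_trans ?_ ((hC t ht).trans (Real.le_coe_toNNReal C))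
  exacts [le_max_left _ _, le_max_right _ _]

lemma SolvesSturmLiouvilleSystem.hasDerivWithinAt_prodMk
    (hQP : SolvesSturmLiouvilleSystem h1 h2 K s Q P) {t : ℝ} (ht : t ∈ s) :
    HasDerivWithinAt (fun t ↦ (Q t, P t)) (sturmLiouvilleField h1 h2 K t (Q t, P t)) s t :=
  (hQP t ht).1.prodMk (hQP t ht).2

lemma exists_solvesSturmLiouvilleSystem (hab : a ≤ b) (ht₀ : t₀ ∈ Icc a b)
    (hh1 : ContinuousOn h1 (Icc a b)) (hh1₀ : ∀ t ∈ Icc a b, h1 t ≠ 0)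
    (hh2 : ContinuousOn h2 (Icc a b)) :
    ∃ Q P : ℝ → ℝ, SolvesSturmLiouvilleSystem h1 h2 K (Icc a b) Q P ∧ Q t₀ = 1 ∧ P t₀ = 0 := by
  obtain ⟨L, hL⟩ := exists_forall_lipschitzWith_sturmLiouvilleField (K := K) hh1 hh1₀ hh2
  have hcont (p : ℝ × ℝ) : ContinuousOn (sturmLiouvilleField h1 h2 K · p) (Icc a b) :=
    (continuousOn_const.div hh1 hh1₀).prodMk ((continuousOn_const.mul hh2).mul continuousOn_const)
  obtain ⟨γ, hγ₀, hγ⟩ :=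
    exists_eq_forall_mem_Icc_hasDerivWithinAt_of_lipschitzWith hab ht₀ hcont hL (1, 0)
  refine ⟨fun t ↦ (γ t).1, fun t ↦ (γ t).2, fun t ht ↦ ⟨?_, ?_⟩, by simp [hγ₀], by simp [hγ₀]⟩
  exacts [(ContinuousLinearMap.fst ℝ ℝ ℝ).hasFDerivAt.comp_hasDerivWithinAt t (hγ t ht),
    (ContinuousLinearMap.snd ℝ ℝ ℝ).hasFDerivAt.comp_hasDerivWithinAt t (hγ t ht)]

lemma SolvesSturmLiouvilleSystem.eqOn {Q' P' : ℝ → ℝ}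
    (hQP : SolvesSturmLiouvilleSystem h1 h2 K (Icc a b) Q P)
    (hQP' : SolvesSturmLiouvilleSystem h1 h2 K (Icc a b) Q' P')
    (hh1 : ContinuousOn h1 (Icc a b)) (hh1₀ : ∀ t ∈ Icc a b, h1 t ≠ 0)
    (hh2 : ContinuousOn h2 (Icc a b)) (ht₀ : t₀ ∈ Icc a b) (hQ : Q t₀ = Q' t₀)
    (hP : P t₀ = P' t₀) : EqOn Q Q' (Icc a b) := by
  obtain ⟨L, hL⟩ := exists_forall_lipschitzWith_sturmLiouvilleField (K := K) hh1 hh1₀ hh2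
  intro t ht
  exact congrArg Prod.fst <| ODE_solution_unique_of_mem_Icc_of_hasDerivWithinAt hL ht₀
    (fun _ ↦ hQP.hasDerivWithinAt_prodMk) (fun _ ↦ hQP'.hasDerivWithinAt_prodMk)
    (Prod.ext hQ hP) ht

lemma SolvesSturmLiouvilleSystem.derivWithin_eq
    (hQP : SolvesSturmLiouvilleSystem h1 h2 K (Icc a b) Q P)
    (hab : a < b) {t : ℝ} (ht : t ∈ Icc a b) : derivWithin Q (Icc a b) t = P t / h1 t :=
  (hQP t ht).1.derivWithin (uniqueDiffOn_Icc hab t ht)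

lemma SolvesSturmLiouvilleSystem.isSturmLiouvilleSolution
    (hQP : SolvesSturmLiouvilleSystem h1 h2 K (Icc a b) Q P) (hab : a < b)
    (hh1 : ContDiffOn ℝ 1 h1 (Icc a b)) (hh1₀ : ∀ t ∈ Icc a b, h1 t ≠ 0)
    (hh2 : ContinuousOn h2 (Icc a b)) : IsSturmLiouvilleSolution h1 h2 K (Icc a b) Q := by
  have hs := uniqueDiffOn_Icc hab
  have hflux : EqOn (flux h1 (Icc a b) Q) P (Icc a b) := fun t ht ↦ by
    rw [flux, hQP.derivWithin_eq hab ht, mul_div_cancel₀ _ (hh1₀ t ht)]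
  have hQc : ContinuousOn Q (Icc a b) := HasDerivWithinAt.continuousOn fun t ht ↦ (hQP t ht).1
  have hP : ContDiffOn ℝ (0 + 1) P (Icc a b) := contDiffOn_succ_of_hasDerivWithinAt hs
    (fun t ht ↦ (hQP t ht).2) (contDiffOn_zero.2 ((continuousOn_const.mul hh2).mul hQc))
  have hQ : ContDiffOn ℝ (1 + 1) Q (Icc a b) := contDiffOn_succ_of_hasDerivWithinAt hs
    (fun t ht ↦ (hQP t ht).1) (hP.div hh1 hh1₀)
  refine ⟨hQ, fun t ht ↦ ?_⟩
  rw [derivWithin_congr hflux (hflux ht)]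
  exact (hQP t ht).2.derivWithin (hs t ht)

lemma IsSturmLiouvilleSolution.solvesSturmLiouvilleSystem
    (hq : IsSturmLiouvilleSolution h1 h2 K (Icc a b) q) (hab : a < b)
    (hh1 : DifferentiableOn ℝ h1 (Icc a b)) (hh1₀ : ∀ t ∈ Icc a b, h1 t ≠ 0) :
    SolvesSturmLiouvilleSystem h1 h2 K (Icc a b) q (flux h1 (Icc a b) q) := by
  have hq' : DifferentiableOn ℝ (derivWithin q (Icc a b)) (Icc a b) :=
    (hq.1.derivWithin (uniqueDiffOn_Icc hab) (m := 1) (by norm_num)).differentiableOn one_ne_zero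
  refine fun t ht ↦ ⟨?_, ?_⟩
  · rw [flux, mul_div_cancel_left₀ _ (hh1₀ t ht)]
    exact (hq.1.differentiableOn two_ne_zero t ht).hasDerivWithinAt
  · rw [← hq.2 t ht]
    exact ((hh1.mul hq') t ht).hasDerivWithinAt

theorem exists_isSturmLiouvilleSolution (hab : a < b) (ht₀ : t₀ ∈ Icc a b)
    (hh1 : ContDiffOn ℝ 1 h1 (Icc a b)) (hh1₀ : ∀ t ∈ Icc a b, h1 t ≠ 0)
    (hh2 : ContinuousOn h2 (Icc a b)) :
    ∃ q, IsSturmLiouvilleSolution h1 h2 K (Icc a b) q ∧ q t₀ = 1 ∧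
      derivWithin q (Icc a b) t₀ = 0 := by
  obtain ⟨Q, P, hQP, hQ₀, hP₀⟩ :=
    exists_solvesSturmLiouvilleSystem (K := K) hab.le ht₀ hh1.continuousOn hh1₀ hh2
  exact ⟨Q, hQP.isSturmLiouvilleSolution hab hh1 hh1₀ hh2, hQ₀,
    by rw [hQP.derivWithin_eq hab ht₀, hP₀, zero_div]⟩

theorem IsSturmLiouvilleSolution.eqOn {q' : ℝ → ℝ}
    (hq : IsSturmLiouvilleSolution h1 h2 K (Icc a b) q)
    (hq' : IsSturmLiouvilleSolution h1 h2 K (Icc a b) q') (hab : a < b)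
    (hh1 : ContDiffOn ℝ 1 h1 (Icc a b)) (hh1₀ : ∀ t ∈ Icc a b, h1 t ≠ 0)
    (hh2 : ContinuousOn h2 (Icc a b)) (ht₀ : t₀ ∈ Icc a b) (h₀ : q t₀ = q' t₀)
    (h₀' : derivWithin q (Icc a b) t₀ = derivWithin q' (Icc a b) t₀) :
    EqOn q q' (Icc a b) :=
  (hq.solvesSturmLiouvilleSystem hab (hh1.differentiableOn one_ne_zero) hh1₀).eqOn
    (hq'.solvesSturmLiouvilleSystem hab (hh1.differentiableOn one_ne_zero) hh1₀)
    hh1.continuousOn hh1₀ hh2 ht₀ h₀ (by rw [flux, flux, h₀'])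

lemma IsSturmLiouvilleSolution.monotoneOn_mul_flux
    (hq : IsSturmLiouvilleSolution h1 h2 K (Icc a b) q) (hab : a < b)
    (hh1 : DifferentiableOn ℝ h1 (Icc a b)) (hh1₀ : ∀ t ∈ Icc a b, 0 < h1 t)
    (hh2 : ∀ t ∈ Icc a b, 0 ≤ h2 t) (hK : 0 ≤ K) :
    MonotoneOn (fun t ↦ q t * flux h1 (Icc a b) q t) (Icc a b) := by
  have hsys := hq.solvesSturmLiouvilleSystem hab hh1 fun t ht ↦ (hh1₀ t ht).ne'
  refine monotoneOn_Icc_of_hasDerivWithinAt_nonneg (fun t ht ↦ (hsys t ht).1.mul (hsys t ht).2)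
    fun t ht ↦ ?_
  have := hh1₀ t (Ioo_subset_Icc_self ht)
  have := hh2 t (Ioo_subset_Icc_self ht)
  rw [div_mul_eq_mul_div, ← mul_assoc, ← sq, mul_comm (q t), mul_assoc, ← sq]
  positivity

lemma IsSturmLiouvilleSolution.one_le (hq : IsSturmLiouvilleSolution h1 h2 K (Icc a b) q)
    (hab : a < b) (hh1 : DifferentiableOn ℝ h1 (Icc a b)) (hh1₀ : ∀ t ∈ Icc a b, 0 < h1 t)
    (hh2 : ∀ t ∈ Icc a b, 0 ≤ h2 t) (hK : 0 ≤ K) (ht₀ : t₀ ∈ Icc a b) (hq₀ : q t₀ = 1)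
    (hq₀' : derivWithin q (Icc a b) t₀ = 0) : ∀ t ∈ Icc a b, 1 ≤ q t := by
  have hsys := hq.solvesSturmLiouvilleSystem hab hh1 fun t ht ↦ (hh1₀ t ht).ne'
  have hmono := hq.monotoneOn_mul_flux hab hh1 hh1₀ hh2 hK
  have hS₀ : q t₀ * flux h1 (Icc a b) q t₀ = 0 := by simp [flux, hq₀']
  -- `q * flux` is monotone and vanishes at `t₀`, so `(q ^ 2)' = 2 q flux / h1` has the sign
  -- of `t - t₀`
  have hmin : IsMinOn (fun t ↦ q t * q t) (Icc a b) t₀ :=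
    isMinOn_Icc_of_hasDerivWithinAt (fun t ht ↦ (hsys t ht).1.mul (hsys t ht).1) ht₀ fun t ht ↦ by
      have hS : 0 ≤ (t - t₀) * (q t * flux h1 (Icc a b) q t) := by
        rcases le_total t₀ t with h | h
        · exact mul_nonneg (sub_nonneg.2 h) (hS₀ ▸ hmono ht₀ ht h)
        · exact mul_nonneg_of_nonpos_of_nonpos (sub_nonpos.2 h) (hS₀ ▸ hmono ht ht₀ h)
      have := hh1₀ t ht
      rw [show ∀ F, (t - t₀) * (F / h1 t * q t + q t * (F / h1 t))
        = 2 * ((t - t₀) * (q t * F)) / h1 t by intro; ring]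
      positivity
  refine isPreconnected_Icc.one_le_of_one_le_sq
    (HasDerivWithinAt.continuousOn fun t ht ↦ (hsys t ht).1) ht₀ (hq₀ ▸ zero_le_one)
    fun t ht ↦ ?_
  simpa [hq₀, sq] using hmin ht

lemma IsSturmLiouvilleSolution.derivWithin_nonneg_of_le
    (hq : IsSturmLiouvilleSolution h1 h2 K (Icc a b) q) (hab : a < b)
    (hh1 : DifferentiableOn ℝ h1 (Icc a b)) (hh1₀ : ∀ t ∈ Icc a b, 0 < h1 t)
    (hh2 : ∀ t ∈ Icc a b, 0 ≤ h2 t) (hK : 0 ≤ K) (ht₀ : t₀ ∈ Icc a b) (hq₀ : q t₀ = 1)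
    (hq₀' : derivWithin q (Icc a b) t₀ = 0) {t : ℝ} (ht : t ∈ Icc a b) (h : t₀ ≤ t) :
    0 ≤ derivWithin q (Icc a b) t := by
  have hS := hq.monotoneOn_mul_flux hab hh1 hh1₀ hh2 hK ht₀ ht h
  simp only [flux, hq₀', mul_zero] at hS
  exact nonneg_of_mul_nonneg_right (nonneg_of_mul_nonneg_right hS
    (one_pos.trans_le (hq.one_le hab hh1 hh1₀ hh2 hK ht₀ hq₀ hq₀' t ht))) (hh1₀ t ht)

lemma IsSturmLiouvilleSolution.derivWithin_nonpos_of_le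
    (hq : IsSturmLiouvilleSolution h1 h2 K (Icc a b) q) (hab : a < b)
    (hh1 : DifferentiableOn ℝ h1 (Icc a b)) (hh1₀ : ∀ t ∈ Icc a b, 0 < h1 t)
    (hh2 : ∀ t ∈ Icc a b, 0 ≤ h2 t) (hK : 0 ≤ K) (ht₀ : t₀ ∈ Icc a b) (hq₀ : q t₀ = 1)
    (hq₀' : derivWithin q (Icc a b) t₀ = 0) {t : ℝ} (ht : t ∈ Icc a b) (h : t ≤ t₀) :
    derivWithin q (Icc a b) t ≤ 0 := by
  have hS := hq.monotoneOn_mul_flux hab hh1 hh1₀ hh2 hK ht ht₀ h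
  simp only [flux, hq₀', mul_zero] at hS
  exact nonpos_of_mul_nonpos_right (nonpos_of_mul_nonpos_right hS
    (one_pos.trans_le (hq.one_le hab hh1 hh1₀ hh2 hK ht₀ hq₀ hq₀' t ht))) (hh1₀ t ht)

lemma IsSturmLiouvilleSolution.strictMonoOn_flux
    (hq : IsSturmLiouvilleSolution h1 h2 K (Icc a b) q) (hab : a < b)
    (hh1 : DifferentiableOn ℝ h1 (Icc a b)) (hh1₀ : ∀ t ∈ Icc a b, h1 t ≠ 0)
    (hpos : ∀ t ∈ Ioo a b, 0 < K * h2 t * q t) : StrictMonoOn (flux h1 (Icc a b) q) (Icc a b) :=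
  strictMonoOn_Icc_of_hasDerivWithinAt_pos
    (fun t ht ↦ (hq.solvesSturmLiouvilleSystem hab hh1 hh1₀ t ht).2) hpos

lemma IsSturmLiouvilleSolution.wronskian_eq {q' : ℝ → ℝ}
    (hq : IsSturmLiouvilleSolution h1 h2 K (Icc a b) q)
    (hq' : IsSturmLiouvilleSolution h1 h2 K (Icc a b) q') (hab : a < b)
    (hh1 : DifferentiableOn ℝ h1 (Icc a b)) (hh1₀ : ∀ t ∈ Icc a b, h1 t ≠ 0) :
    ∀ t ∈ Icc a b, q t * flux h1 (Icc a b) q' t - flux h1 (Icc a b) q t * q' t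
      = q a * flux h1 (Icc a b) q' a - flux h1 (Icc a b) q a * q' a := by
  have hsys := hq.solvesSturmLiouvilleSystem hab hh1 hh1₀
  have hsys' := hq'.solvesSturmLiouvilleSystem hab hh1 hh1₀
  have hW : ∀ t ∈ Icc a b, HasDerivWithinAt
      (fun t ↦ q t * flux h1 (Icc a b) q' t - flux h1 (Icc a b) q t * q' t) 0 (Icc a b) t :=
    fun t ht ↦ (((hsys t ht).1.mul (hsys' t ht).2).sub ((hsys t ht).2.mul (hsys' t ht).1))
      |>.congr_deriv (by ring)
  exact constant_of_has_deriv_right_zero (HasDerivWithinAt.continuousOn hW) fun t ht ↦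
    (hW t (Ico_subset_Icc_self ht)).mono_of_mem_nhdsWithin (Icc_mem_nhdsGE_of_mem ht)

lemma IsSturmLiouvilleSolution.eq_one_add_integral
    (hq : IsSturmLiouvilleSolution h1 h2 K (Icc a b) q) (hab : a < b)
    (hh1 : ContDiffOn ℝ 1 h1 (Icc a b)) (hh1₀ : ∀ t ∈ Icc a b, h1 t ≠ 0)
    (hh2 : ContinuousOn h2 (Icc a b)) (ht₀ : t₀ ∈ Icc a b) (hq₀ : q t₀ = 1)
    (hq₀' : derivWithin q (Icc a b) t₀ = 0) {v : ℝ} (hv : v ∈ Icc a b) :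
    q v = 1 + K * ∫ w in t₀..v, (h1 w)⁻¹ * ∫ w' in t₀..w, h2 w' * q w' := by
  have hsys := hq.solvesSturmLiouvilleSystem hab (hh1.differentiableOn one_ne_zero) hh1₀
  have hqc : ContinuousOn q (Icc a b) := HasDerivWithinAt.continuousOn fun t ht ↦ (hsys t ht).1
  have hflux : ∀ w ∈ Icc a b, flux h1 (Icc a b) q w = K * ∫ w' in t₀..w, h2 w' * q w' :=
    fun w hw ↦ by
      rw [← intervalIntegral.integral_const_mul, ← sub_zero (flux h1 _ q w),
        ← mul_zero (h1 t₀), ← hq₀', ← flux,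
        ← integral_eq_sub_of_forall_mem_Icc_hasDerivWithinAt (fun t ht ↦ (hsys t ht).2)
          ((continuousOn_const.mul hh2).mul hqc) ht₀ hw]
      simp only [mul_assoc]
  rw [← intervalIntegral.integral_const_mul,
    intervalIntegral.integral_congr (g := fun w ↦ flux h1 (Icc a b) q w / h1 w)
      fun w hw ↦ by simp only [hflux w (uIcc_subset_Icc ht₀ hv hw)]; ring,
    integral_eq_sub_of_forall_mem_Icc_hasDerivWithinAt (fun t ht ↦ (hsys t ht).1)
      ((HasDerivWithinAt.continuousOn fun t ht ↦ (hsys t ht).2).div hh1.continuousOn hh1₀)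
      ht₀ hv, hq₀, add_sub_cancel]

end SturmLiouville

/-- existence, uniqueness, monotonicity, integral equation, and Wronskian
identity for the Sturm–Liouville solutions `𝔮_α` and `𝔮_β` on `[α,β]`. -/
theorem stmt14
    (α β : ℝ) (hαβ : α < β) (c0 : ℝ) (hc0 : 0 < c0)
    (h1 h2 : ℝ → ℝ)
    (hh1 : ContDiff ℝ (⊤ : ℕ∞) h1) (hh2 : ContDiff ℝ (⊤ : ℕ∞) h2)
    (hh1c : ∀ v ∈ Icc α β, c0 ≤ h1 v) (hh2c : ∀ v ∈ Icc α β, c0 ≤ h2 v)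
    (k : ℤ) (hk : k ≠ 0) :
    ∃ qa : ℝ → ℝ,
      (ContDiffOn ℝ 2 qa (Icc α β) ∧ qa α = 1 ∧ derivWithin qa (Icc α β) α = 0 ∧
        ∀ v ∈ Icc α β,
          derivWithin (fun w => h1 w * derivWithin qa (Icc α β) w) (Icc α β) v
            = (k:ℝ) ^ 2 * h2 v * qa v) ∧
      (∀ ψ : ℝ → ℝ,
        (ContDiffOn ℝ 2 ψ (Icc α β) ∧ ψ α = 1 ∧ derivWithin ψ (Icc α β) α = 0 ∧
          ∀ v ∈ Icc α β,
            derivWithin (fun w => h1 w * derivWithin ψ (Icc α β) w) (Icc α β) v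
              = (k:ℝ) ^ 2 * h2 v * ψ v) →
        EqOn ψ qa (Icc α β)) ∧
      (∀ v ∈ Icc α β, 1 ≤ qa v ∧ 0 ≤ derivWithin qa (Icc α β) v) ∧
      (∀ v ∈ Icc α β,
        qa v = 1 + (k:ℝ) ^ 2 * ∫ w in α..v, (h1 w)⁻¹ * ∫ w' in α..w, h2 w' * qa w') ∧
      ∃ qb : ℝ → ℝ,
        (ContDiffOn ℝ 2 qb (Icc α β) ∧ qb β = 1 ∧ derivWithin qb (Icc α β) β = 0 ∧
          ∀ v ∈ Icc α β,
            derivWithin (fun w => h1 w * derivWithin qb (Icc α β) w) (Icc α β) v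
              = (k:ℝ) ^ 2 * h2 v * qb v) ∧
        (∀ ψ : ℝ → ℝ,
          (ContDiffOn ℝ 2 ψ (Icc α β) ∧ ψ β = 1 ∧ derivWithin ψ (Icc α β) β = 0 ∧
            ∀ v ∈ Icc α β,
              derivWithin (fun w => h1 w * derivWithin ψ (Icc α β) w) (Icc α β) v
                = (k:ℝ) ^ 2 * h2 v * ψ v) →
          EqOn ψ qb (Icc α β)) ∧
        (∀ v ∈ Icc α β, 1 ≤ qb v ∧ derivWithin qb (Icc α β) v ≤ 0) ∧
        (∀ v ∈ Icc α β,
          h1 v * (qa v * derivWithin qb (Icc α β) v - derivWithin qa (Icc α β) v * qb v)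
            = h1 α * derivWithin qb (Icc α β) α) ∧
        h1 α * derivWithin qb (Icc α β) α = -(h1 β * derivWithin qa (Icc α β) β) ∧
        h1 α * derivWithin qb (Icc α β) α < 0 := by
  have hK : 0 < (k : ℝ) ^ 2 := by positivity
  have hα : α ∈ Icc α β := left_mem_Icc.2 hαβ.le
  have hβ : β ∈ Icc α β := right_mem_Icc.2 hαβ.le
  have h1pos : ∀ v ∈ Icc α β, 0 < h1 v := fun v hv ↦ hc0.trans_le (hh1c v hv)
  have h1ne : ∀ v ∈ Icc α β, h1 v ≠ 0 := fun v hv ↦ (h1pos v hv).ne'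
  have h2pos : ∀ v ∈ Icc α β, 0 < h2 v := fun v hv ↦ hc0.trans_le (hh2c v hv)
  have h2nn : ∀ v ∈ Icc α β, 0 ≤ h2 v := fun v hv ↦ (h2pos v hv).le
  have hh1' : ContDiffOn ℝ 1 h1 (Icc α β) := (hh1.of_le (by exact_mod_cast le_top)).contDiffOn
  have hh1d : DifferentiableOn ℝ h1 (Icc α β) := hh1'.differentiableOn one_ne_zero
  have hh2' : ContinuousOn h2 (Icc α β) := hh2.continuous.continuousOn
  obtain ⟨qa, hqa, hqa₀, hqa₀'⟩ :=
    exists_isSturmLiouvilleSolution (K := (k : ℝ) ^ 2) hαβ hα hh1' h1ne hh2'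
  obtain ⟨qb, hqb, hqb₀, hqb₀'⟩ :=
    exists_isSturmLiouvilleSolution (K := (k : ℝ) ^ 2) hαβ hβ hh1' h1ne hh2'
  have hW := hqa.wronskian_eq hqb hαβ hh1d h1ne
  simp only [flux, hqa₀, hqa₀', mul_zero, zero_mul, one_mul, sub_zero] at hW
  refine ⟨qa, ⟨hqa.1, hqa₀, hqa₀', hqa.2⟩,
    fun ψ ⟨hψ, hψ₀, hψ₀', hψode⟩ ↦ IsSturmLiouvilleSolution.eqOn ⟨hψ, hψode⟩ hqa hαβ hh1' h1ne
      hh2' hα (hψ₀.trans hqa₀.symm) (hψ₀'.trans hqa₀'.symm),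
    fun v hv ↦ ⟨hqa.one_le hαβ hh1d h1pos h2nn hK.le hα hqa₀ hqa₀' v hv,
      hqa.derivWithin_nonneg_of_le hαβ hh1d h1pos h2nn hK.le hα hqa₀ hqa₀' hv hv.1⟩,
    fun v hv ↦ hqa.eq_one_add_integral hαβ hh1' h1ne hh2' hα hqa₀ hqa₀' hv,
    qb, ⟨hqb.1, hqb₀, hqb₀', hqb.2⟩,
    fun ψ ⟨hψ, hψ₀, hψ₀', hψode⟩ ↦ IsSturmLiouvilleSolution.eqOn ⟨hψ, hψode⟩ hqb hαβ hh1' h1ne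
      hh2' hβ (hψ₀.trans hqb₀.symm) (hψ₀'.trans hqb₀'.symm),
    fun v hv ↦ ⟨hqb.one_le hαβ hh1d h1pos h2nn hK.le hβ hqb₀ hqb₀' v hv,
      hqb.derivWithin_nonpos_of_le hαβ hh1d h1pos h2nn hK.le hβ hqb₀ hqb₀' hv hv.2⟩,
    fun v hv ↦ by rw [← hW v hv]; ring, by simpa [hqb₀, hqb₀'] using (hW β hβ).symm, ?_⟩
  have hflux := hqb.strictMonoOn_flux hαβ hh1d h1ne fun t ht ↦ by
    have := hqb.one_le hαβ hh1d h1pos h2nn hK.le hβ hqb₀ hqb₀' t (Ioo_subset_Icc_self ht)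
    have := h2pos t (Ioo_subset_Icc_self ht)
    positivity
  simpa [flux, hqb₀'] using hflux hα hβ hαβ
end

section
/- There exists a constant C ≥ 1, depending only on the lower bound c0 and on the supremum norms of h1, h2 and h1' (in particular independent of the nonzero integer k), such that for all v ∈ [α,β]: C^{-1} |k| min(|k|(v − α), 1) ≤ 𝔮_α'(v)/𝔮_α(v) ≤ C |k| min(|k|(v − α), 1), and C^{-1} e^{|k|(v − α)/C} ≤ 𝔮_α(v) ≤ e^{C|k|(v − α)}. -/
/-!
Put `K = |k|`, let `m ≤ h₁, h₂ ≤ M` on the interval, and write `p = h₁ q'` for the flux, so that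
`p' = K² h₂ q` and `p(α) = 0`. The energy identity `(q p)' = h₁ q'² + K² h₂ q² ≥ 0` gives
`q q' ≥ 0`, hence `q² ≥ 1`; so `q` never vanishes, and `q`, `p` are nondecreasing with `q ≥ 1`.
Gronwall comparisons for `K M q - p` and `p - K m q` (both satisfy `y' ≥ -K y`) show `p ≍ K q`
once `K (v - α) ≥ 1`, while for `K (v - α) ≤ 1` integrating `p' = K² h₂ q` gives
`p ≍ K² (v - α) q`. Dividing by `h₁` bounds `q'/q` above and below by multiples of
`K min(K (v - α), 1)`; Gronwall for `q` itself then gives the exponential bounds, the lower one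
starting from `α + 1/K`.
-/

open Set Real

theorem monotoneOn_Icc_of_hasDerivAt_nonneg {a b : ℝ} {f f' : ℝ → ℝ}
    (hf : ContinuousOn f (Icc a b)) (hf' : ∀ x ∈ Ioo a b, HasDerivAt f (f' x) x)
    (hf'₀ : ∀ x ∈ Ioo a b, 0 ≤ f' x) : MonotoneOn f (Icc a b) :=
  monotoneOn_of_hasDerivWithinAt_nonneg (convex_Icc a b) hf
    (fun x hx => (hf' x (by simpa using hx)).hasDerivWithinAt)
    (fun x hx => hf'₀ x (by simpa using hx))

theorem mul_exp_le_of_mul_le_deriv {a b c : ℝ} {g g' : ℝ → ℝ}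
    (hg : ContinuousOn g (Icc a b)) (hg' : ∀ x ∈ Ioo a b, HasDerivAt g (g' x) x)
    (hle : ∀ x ∈ Ioo a b, c * g x ≤ g' x) {x : ℝ} (hx : x ∈ Icc a b) :
    g a * exp (c * (x - a)) ≤ g x := by
  have hmono : MonotoneOn (fun y => exp (-c * (y - a)) * g y) (Icc a b) := by
    refine monotoneOn_Icc_of_hasDerivAt_nonneg
      (f' := fun y => exp (-c * (y - a)) * (g' y - c * g y))
      ((by fun_prop : Continuous fun y => exp (-c * (y - a))).continuousOn.mul hg)
      (fun y hy => ((((hasDerivAt_id y).sub_const a).const_mul (-c)).exp.mul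
        (hg' y hy)).congr_deriv (by simp only [id]; ring))
      (fun y hy => mul_nonneg (exp_pos _).le (sub_nonneg.2 (hle y hy)))
  have h := hmono (left_mem_Icc.2 (hx.1.trans hx.2)) hx hx.1
  simp only [sub_self, mul_zero, exp_zero, one_mul] at h
  calc g a * exp (c * (x - a)) ≤ exp (-c * (x - a)) * g x * exp (c * (x - a)) :=
        mul_le_mul_of_nonneg_right h (exp_pos _).le
    _ = g x := by rw [mul_right_comm, ← exp_add, neg_mul, neg_add_cancel, exp_zero, one_mul]

theorem le_mul_exp_of_deriv_le_mul {a b c : ℝ} {g g' : ℝ → ℝ}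
    (hg : ContinuousOn g (Icc a b)) (hg' : ∀ x ∈ Ioo a b, HasDerivAt g (g' x) x)
    (hle : ∀ x ∈ Ioo a b, g' x ≤ c * g x) {x : ℝ} (hx : x ∈ Icc a b) :
    g x ≤ g a * exp (c * (x - a)) := by
  have h := mul_exp_le_of_mul_le_deriv hg.neg (fun y hy => (hg' y hy).neg)
    (fun y hy => show c * -g y ≤ -g' y by linarith [hle y hy]) hx
  simp only [Pi.neg_apply] at h
  linarith

structure IsNormalizedSolution (a b m M K : ℝ) (h₁ h₂ q q' p : ℝ → ℝ) : Prop where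
  m_pos : 0 < m
  K_pos : 0 < K
  h₁_mem : ∀ x ∈ Icc a b, h₁ x ∈ Icc m M
  h₂_mem : ∀ x ∈ Icc a b, h₂ x ∈ Icc m M
  flux_eq : ∀ x ∈ Icc a b, p x = h₁ x * q' x
  continuousOn : ContinuousOn q (Icc a b)
  continuousOn_flux : ContinuousOn p (Icc a b)
  hasDerivAt : ∀ x ∈ Ioo a b, HasDerivAt q (q' x) x
  hasDerivAt_flux : ∀ x ∈ Ioo a b, HasDerivAt p (K ^ 2 * h₂ x * q x) x
  apply_left : q a = 1
  flux_left : p a = 0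

namespace IsNormalizedSolution

theorem of_contDiffOn {a b m M K : ℝ} {h₁ h₂ q : ℝ → ℝ} (hab : a < b) (hm : 0 < m) (hK : 0 < K)
    (hh₁ : ContDiff ℝ 1 h₁) (h₁_mem : ∀ x ∈ Icc a b, h₁ x ∈ Icc m M)
    (h₂_mem : ∀ x ∈ Icc a b, h₂ x ∈ Icc m M) (hq : ContDiffOn ℝ 2 q (Icc a b))
    (hq_a : q a = 1) (hq'_a : derivWithin q (Icc a b) a = 0)
    (hODE : ∀ v ∈ Icc a b, derivWithin (fun w => h₁ w * derivWithin q (Icc a b) w) (Icc a b) v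
      = K ^ 2 * h₂ v * q v) :
    IsNormalizedSolution a b m M K h₁ h₂ q (derivWithin q (Icc a b))
      (fun w => h₁ w * derivWithin q (Icc a b) w) := by
  have hq' : ContDiffOn ℝ 1 (derivWithin q (Icc a b)) (Icc a b) :=
    hq.derivWithin (uniqueDiffOn_Icc hab) (by norm_num)
  have hp : DifferentiableOn ℝ (fun w => h₁ w * derivWithin q (Icc a b) w) (Icc a b) :=
    (hh₁.differentiable (by norm_num)).differentiableOn.mul (hq'.differentiableOn (by norm_num))
  refine ⟨hm, hK, h₁_mem, h₂_mem, fun _ _ => rfl, hq.continuousOn,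
    hh₁.continuous.continuousOn.mul hq'.continuousOn, fun x hx => ?_, fun x hx => ?_, hq_a,
    by simp [hq'_a]⟩
  · exact ((hq.differentiableOn (by norm_num)) x (Ioo_subset_Icc_self hx)).hasDerivWithinAt
      |>.hasDerivAt (Icc_mem_nhds hx.1 hx.2)
  · rw [← hODE x (Ioo_subset_Icc_self hx)]
    exact (hp x (Ioo_subset_Icc_self hx)).hasDerivWithinAt.hasDerivAt (Icc_mem_nhds hx.1 hx.2)

variable {a b m M K : ℝ} {h₁ h₂ q q' p : ℝ → ℝ} {v : ℝ}
  (hs : IsNormalizedSolution a b m M K h₁ h₂ q q' p)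
include hs

theorem h₁_pos (hv : v ∈ Icc a b) : 0 < h₁ v := hs.m_pos.trans_le (hs.h₁_mem v hv).1

theorem h₂_pos (hv : v ∈ Icc a b) : 0 < h₂ v := hs.m_pos.trans_le (hs.h₂_mem v hv).1

theorem M_pos (hv : v ∈ Icc a b) : 0 < M := (hs.h₁_pos hv).trans_le (hs.h₁_mem v hv).2

theorem apply_mul_flux_nonneg (hv : v ∈ Icc a b) : 0 ≤ q v * p v := by
  have hmono := monotoneOn_Icc_of_hasDerivAt_nonneg (hs.continuousOn.mul hs.continuousOn_flux)
    (fun x hx => (hs.hasDerivAt x hx).mul (hs.hasDerivAt_flux x hx)) fun x hx => by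
      have hx' := Ioo_subset_Icc_self hx
      have := hs.h₁_pos hx'
      have := hs.h₂_pos hx'
      rw [hs.flux_eq x hx', show q' x * (h₁ x * q' x) + q x * (K ^ 2 * h₂ x * q x)
        = h₁ x * q' x ^ 2 + K ^ 2 * h₂ x * q x ^ 2 by ring]
      positivity
  simpa [hs.flux_left] using hmono (left_mem_Icc.2 (hv.1.trans hv.2)) hv hv.1

theorem apply_mul_deriv_nonneg (hv : v ∈ Icc a b) : 0 ≤ q v * q' v := by
  have h := hs.apply_mul_flux_nonneg hv
  rw [hs.flux_eq v hv, mul_left_comm] at h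
  exact (mul_nonneg_iff_of_pos_left (hs.h₁_pos hv)).1 h

theorem one_le_apply_sq (hv : v ∈ Icc a b) : 1 ≤ q v ^ 2 := by
  have hmono := monotoneOn_Icc_of_hasDerivAt_nonneg (hs.continuousOn.pow 2)
    (fun x hx => (hs.hasDerivAt x hx).pow 2) fun x hx => by
      have := hs.apply_mul_deriv_nonneg (Ioo_subset_Icc_self hx)
      simp only [Nat.cast_ofNat, Nat.add_one_sub_one, pow_one]
      linarith
  simpa [hs.apply_left] using hmono (left_mem_Icc.2 (hv.1.trans hv.2)) hv hv.1

theorem apply_pos (hv : v ∈ Icc a b) : 0 < q v := by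
  by_contra! h
  have hsub : Icc a v ⊆ Icc a b := Icc_subset_Icc_right hv.2
  obtain ⟨c, hc, hqc⟩ := intermediate_value_Icc' hv.1 (hs.continuousOn.mono hsub)
    ⟨h, hs.apply_left ▸ zero_le_one⟩
  have := hs.one_le_apply_sq (hsub hc)
  rw [hqc] at this
  norm_num at this

theorem deriv_nonneg (hv : v ∈ Icc a b) : 0 ≤ q' v :=
  (mul_nonneg_iff_of_pos_left (hs.apply_pos hv)).1 (hs.apply_mul_deriv_nonneg hv)

theorem monotoneOn : MonotoneOn q (Icc a b) :=
  monotoneOn_Icc_of_hasDerivAt_nonneg hs.continuousOn hs.hasDerivAt fun _ hx =>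
    hs.deriv_nonneg (Ioo_subset_Icc_self hx)

theorem one_le_apply (hv : v ∈ Icc a b) : 1 ≤ q v :=
  hs.apply_left ▸ hs.monotoneOn (left_mem_Icc.2 (hv.1.trans hv.2)) hv hv.1

theorem mul_deriv_le_flux (hv : v ∈ Icc a b) : m * q' v ≤ p v :=
  hs.flux_eq v hv ▸ mul_le_mul_of_nonneg_right (hs.h₁_mem v hv).1 (hs.deriv_nonneg hv)

theorem flux_le_mul_deriv (hv : v ∈ Icc a b) : p v ≤ M * q' v :=
  hs.flux_eq v hv ▸ mul_le_mul_of_nonneg_right (hs.h₁_mem v hv).2 (hs.deriv_nonneg hv)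

/-- `(K M q - p)' ≥ -K (K M q - p)`, and `K M q - p` starts at `K M > 0`. -/
theorem flux_le_mul_apply (hv : v ∈ Icc a b) : p v ≤ K * M * q v := by
  have h := mul_exp_le_of_mul_le_deriv (c := -K) (g := fun x => K * M * q x - p x)
    ((continuousOn_const.mul hs.continuousOn).sub hs.continuousOn_flux)
    (fun x hx => ((hs.hasDerivAt x hx).const_mul (K * M)).sub (hs.hasDerivAt_flux x hx))
    (fun x hx => by
      show -K * (K * M * q x - p x) ≤ K * M * q' x - K ^ 2 * h₂ x * q x
      have hx' := Ioo_subset_Icc_self hx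
      have := hs.flux_le_mul_deriv hx'
      have := mul_le_mul_of_nonneg_left (mul_le_mul_of_nonneg_right (hs.h₂_mem x hx').2
        (hs.apply_pos hx').le) (sq_nonneg K)
      nlinarith [hs.K_pos]) hv
  simp only [hs.apply_left, hs.flux_left] at h
  have := mul_pos (mul_pos hs.K_pos (hs.M_pos hv)) (exp_pos (-K * (v - a)))
  linarith

/-- `(p - K m q)' ≥ -K (p - K m q)`, and `p - K m q` starts at `-K m`. -/
theorem mul_apply_le_flux_add (hv : v ∈ Icc a b) : K * m * q v ≤ p v + K * m := by
  have h := mul_exp_le_of_mul_le_deriv (c := -K) (g := fun x => p x - K * m * q x)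
    (hs.continuousOn_flux.sub (continuousOn_const.mul hs.continuousOn))
    (fun x hx => (hs.hasDerivAt_flux x hx).sub ((hs.hasDerivAt x hx).const_mul (K * m)))
    (fun x hx => by
      show -K * (p x - K * m * q x) ≤ K ^ 2 * h₂ x * q x - K * m * q' x
      have hx' := Ioo_subset_Icc_self hx
      have := hs.mul_deriv_le_flux hx'
      have := mul_le_mul_of_nonneg_left (mul_le_mul_of_nonneg_right (hs.h₂_mem x hx').1
        (hs.apply_pos hx').le) (sq_nonneg K)
      nlinarith [hs.K_pos]) hv
  simp only [hs.apply_left, hs.flux_left] at h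
  have : exp (-K * (v - a)) ≤ 1 := exp_le_one_iff.2 (by nlinarith [hs.K_pos, hv.1])
  have := mul_le_mul_of_nonneg_left this (mul_pos hs.K_pos hs.m_pos).le
  linarith

theorem linear_le_flux (hv : v ∈ Icc a b) : K ^ 2 * m * (v - a) ≤ p v := by
  have hmono := monotoneOn_Icc_of_hasDerivAt_nonneg
    (hs.continuousOn_flux.sub (by fun_prop : Continuous fun x => K ^ 2 * m * (x - a)).continuousOn)
    (fun x hx => (hs.hasDerivAt_flux x hx).sub
      (((hasDerivAt_id x).sub_const a).const_mul (K ^ 2 * m))) fun x hx => by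
      have hx' := Ioo_subset_Icc_self hx
      have := mul_le_mul (hs.h₂_mem x hx').1 (hs.one_le_apply hx') zero_le_one (hs.h₂_pos hx').le
      simp only [mul_one]
      nlinarith [sq_nonneg K]
  simpa [hs.flux_left] using hmono (left_mem_Icc.2 (hv.1.trans hv.2)) hv hv.1

theorem flux_le_linear (hv : v ∈ Icc a b) : p v ≤ K ^ 2 * M * (v - a) * q v := by
  have hsub : Icc a v ⊆ Icc a b := Icc_subset_Icc_right hv.2
  have hmono := monotoneOn_Icc_of_hasDerivAt_nonneg
    ((by fun_prop : Continuous fun x => K ^ 2 * M * q v * (x - a)).continuousOn.sub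
      (hs.continuousOn_flux.mono hsub))
    (fun x hx => (((hasDerivAt_id x).sub_const a).const_mul (K ^ 2 * M * q v)).sub
      (hs.hasDerivAt_flux x (Ioo_subset_Ioo_right hv.2 hx))) fun x hx => by
      have hx' := hsub (Ioo_subset_Icc_self hx)
      have := mul_le_mul (hs.h₂_mem x hx').2 (hs.monotoneOn hx' hv hx.2.le) (hs.apply_pos hx').le
        (hs.M_pos hv).le
      simp only [mul_one]
      nlinarith [sq_nonneg K]
  have h := hmono (left_mem_Icc.2 hv.1) (right_mem_Icc.2 hv.1) hv.1
  simp only [Pi.sub_apply, sub_self, mul_zero, hs.flux_left] at h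
  linarith

theorem apply_le_exp (hv : v ∈ Icc a b) : q v ≤ exp (M / m * K * (v - a)) := by
  have hq' : ∀ x ∈ Ioo a b, q' x ≤ M / m * K * q x := fun x hx => by
    have hx' := Ioo_subset_Icc_self hx
    rw [div_mul_eq_mul_div, div_mul_eq_mul_div, le_div_iff₀ hs.m_pos]
    linarith [hs.mul_deriv_le_flux hx', hs.flux_le_mul_apply hx']
  have h := le_mul_exp_of_deriv_le_mul hs.continuousOn hs.hasDerivAt hq' hv
  rwa [hs.apply_left, one_mul] at h

theorem mul_le_deriv_of_one_le (hv : v ∈ Icc a b) (hKv : 1 ≤ K * (v - a)) :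
    K * m / (2 * M) * q v ≤ q' v := by
  have hKm : K * m ≤ p v := by
    nlinarith [hs.linear_le_flux hv, mul_le_mul_of_nonneg_left hKv (mul_pos hs.K_pos hs.m_pos).le]
  rw [div_mul_eq_mul_div, div_le_iff₀ (by linarith [hs.M_pos hv])]
  linarith [hs.mul_apply_le_flux_add hv, hs.flux_le_mul_deriv hv]

theorem exp_le_apply (hv : v ∈ Icc a b) : exp (m / (2 * M) * (K * (v - a) - 1)) ≤ q v := by
  have hc : 0 ≤ m / (2 * M) := div_nonneg hs.m_pos.le (by linarith [hs.M_pos hv])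
  rcases le_or_gt (K * (v - a)) 1 with hKv | hKv
  · exact (exp_le_one_iff.2 (mul_nonpos_of_nonneg_of_nonpos hc (by linarith))).trans
      (hs.one_le_apply hv)
  set v₁ := a + 1 / K
  have hKv₁ : K * (v₁ - a) = 1 := by
    simp only [v₁, add_sub_cancel_left, mul_one_div_cancel hs.K_pos.ne']
  have hav₁ : a ≤ v₁ := by simp only [v₁]; linarith [one_div_pos.2 hs.K_pos]
  have hv₁v : v₁ ≤ v := by nlinarith [hs.K_pos]
  have hsub : Icc v₁ b ⊆ Icc a b := Icc_subset_Icc_left hav₁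
  have h := mul_exp_le_of_mul_le_deriv (c := K * m / (2 * M)) (hs.continuousOn.mono hsub)
    (fun x hx => hs.hasDerivAt x (Ioo_subset_Ioo_left hav₁ hx)) (fun x hx =>
      hs.mul_le_deriv_of_one_le (hsub (Ioo_subset_Icc_self hx))
        (by nlinarith [hs.K_pos, hx.1])) ⟨hv₁v, hv.2⟩
  have hq₁ := hs.one_le_apply (hsub (left_mem_Icc.2 (hv₁v.trans hv.2)))
  calc exp (m / (2 * M) * (K * (v - a) - 1)) = exp (K * m / (2 * M) * (v - v₁)) := by
        congr 1; rw [← hKv₁]; ring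
    _ ≤ q v₁ * exp (K * m / (2 * M) * (v - v₁)) := le_mul_of_one_le_left (exp_pos _).le hq₁
    _ ≤ q v := h

theorem deriv_div_le (hv : v ∈ Icc a b) : q' v / q v ≤ M / m * K * min (K * (v - a)) 1 := by
  have key : m * q' v ≤ M * K * min (K * (v - a)) 1 * q v := by
    rcases le_total (K * (v - a)) 1 with hKv | hKv
    · rw [min_eq_left hKv]
      linarith [hs.mul_deriv_le_flux hv, hs.flux_le_linear hv]
    · rw [min_eq_right hKv]
      linarith [hs.mul_deriv_le_flux hv, hs.flux_le_mul_apply hv]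
  rw [div_le_iff₀ (hs.apply_pos hv), div_mul_eq_mul_div, div_mul_eq_mul_div, div_mul_eq_mul_div,
    le_div_iff₀ hs.m_pos]
  linarith

theorem le_deriv_div (hv : v ∈ Icc a b) :
    m / (2 * M * exp (M / m)) * K * min (K * (v - a)) 1 ≤ q' v / q v := by
  have hM := hs.M_pos hv
  have hE : 1 ≤ exp (M / m) := one_le_exp (div_nonneg hM.le hs.m_pos.le)
  have hq'0 := hs.deriv_nonneg hv
  have key : m * K * min (K * (v - a)) 1 * q v ≤ 2 * M * exp (M / m) * q' v := by
    rcases le_total (K * (v - a)) 1 with hKv | hKv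
    · rw [min_eq_left hKv]
      have hqE : q v ≤ exp (M / m) := (hs.apply_le_exp hv).trans (exp_le_exp.2 (by
        rw [mul_assoc]
        exact mul_le_of_le_one_right (div_nonneg hM.le hs.m_pos.le) hKv))
      have ht : 0 ≤ m * K * (K * (v - a)) :=
        mul_nonneg (mul_pos hs.m_pos hs.K_pos).le (by nlinarith [hs.K_pos, hv.1])
      calc m * K * (K * (v - a)) * q v ≤ m * K * (K * (v - a)) * exp (M / m) :=
            mul_le_mul_of_nonneg_left hqE ht
        _ ≤ M * q' v * exp (M / m) := mul_le_mul_of_nonneg_right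
            (by linarith [hs.linear_le_flux hv, hs.flux_le_mul_deriv hv]) (exp_pos _).le
        _ ≤ 2 * M * exp (M / m) * q' v := by nlinarith [mul_nonneg hM.le hq'0]
    · rw [min_eq_right hKv]
      have h := hs.mul_le_deriv_of_one_le hv hKv
      rw [div_mul_eq_mul_div, div_le_iff₀ (by linarith)] at h
      nlinarith [mul_nonneg hM.le hq'0]
  rw [le_div_iff₀ (hs.apply_pos hv), div_mul_eq_mul_div, div_mul_eq_mul_div, div_mul_eq_mul_div,
    div_le_iff₀ (by positivity)]
  linarith

theorem deriv_div_and_growth_bounds (hv : v ∈ Icc a b) {C : ℝ}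
    (hCρ : 2 * (M / m) * exp (M / m) ≤ C) :
    C⁻¹ * K * min (K * (v - a)) 1 ≤ q' v / q v ∧
      q' v / q v ≤ C * K * min (K * (v - a)) 1 ∧
      C⁻¹ * exp (K * (v - a) / C) ≤ q v ∧
      q v ≤ exp (C * K * (v - a)) := by
  have hm := hs.m_pos
  have hM := hs.M_pos hv
  have hmM : m ≤ M := (hs.h₁_mem v hv).1.trans (hs.h₁_mem v hv).2
  have hρ : 1 ≤ M / m := (one_le_div hm).2 hmM
  have hE : 1 ≤ exp (M / m) := one_le_exp (by linarith)
  have hKv : 0 ≤ K * (v - a) := mul_nonneg hs.K_pos.le (sub_nonneg.2 hv.1)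
  have hmin : 0 ≤ K * min (K * (v - a)) 1 := mul_nonneg hs.K_pos.le (le_min hKv zero_le_one)
  have hρC : M / m ≤ C := by nlinarith
  have hC : 0 < C := by linarith
  have hCinv : C⁻¹ ≤ m / (2 * M * exp (M / m)) := by
    calc C⁻¹ ≤ (2 * (M / m) * exp (M / m))⁻¹ := inv_anti₀ (by positivity) hCρ
      _ = m / (2 * M * exp (M / m)) := by field_simp
  refine ⟨?_, ?_, ?_, ?_⟩
  · calc C⁻¹ * K * min (K * (v - a)) 1 ≤ m / (2 * M * exp (M / m)) * K * min (K * (v - a)) 1 := by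
          rw [mul_assoc, mul_assoc]; exact mul_le_mul_of_nonneg_right hCinv hmin
      _ ≤ q' v / q v := hs.le_deriv_div hv
  · calc q' v / q v ≤ M / m * K * min (K * (v - a)) 1 := hs.deriv_div_le hv
      _ ≤ C * K * min (K * (v - a)) 1 := by
          rw [mul_assoc, mul_assoc]; exact mul_le_mul_of_nonneg_right hρC hmin
  · have hc : m / (2 * M) ≤ M / m := by
      rw [div_le_iff₀ (by positivity), div_mul_eq_mul_div, le_div_iff₀ hm]; nlinarith
    have hCc : C⁻¹ ≤ m / (2 * M) := hCinv.trans (div_le_div_of_nonneg_left hm.le (by positivity)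
      (le_mul_of_one_le_right (by positivity) hE))
    calc C⁻¹ * exp (K * (v - a) / C)
        ≤ exp (-(m / (2 * M))) * exp (m / (2 * M) * (K * (v - a))) := by
          gcongr
          · rw [exp_neg, inv_le_inv₀ hC (exp_pos _)]
            exact (exp_le_exp.2 hc).trans (by nlinarith)
          · rw [div_eq_mul_inv, mul_comm]
            exact mul_le_mul_of_nonneg_right hCc hKv
      _ = exp (m / (2 * M) * (K * (v - a) - 1)) := by rw [← exp_add]; ring_nf
      _ ≤ q v := hs.exp_le_apply hv
  · calc q v ≤ exp (M / m * K * (v - a)) := hs.apply_le_exp hv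
      _ ≤ exp (C * K * (v - a)) := by
          rw [mul_assoc, mul_assoc]
          exact exp_le_exp.2 (mul_le_mul_of_nonneg_right hρC hKv)

end IsNormalizedSolution

/-- bounds for `𝔮_α'/𝔮_α` and exponential bounds for `𝔮_α`,
uniformly in the nonzero integer `k`. -/
theorem stmt15
    (α β : ℝ) (hαβ : α < β) (c0 : ℝ) (hc0 : 0 < c0)
    (h1 h2 : ℝ → ℝ)
    (hh1 : ContDiff ℝ (⊤ : ℕ∞) h1) (hh2 : ContDiff ℝ (⊤ : ℕ∞) h2)
    (hh1c : ∀ v ∈ Icc α β, c0 ≤ h1 v) (hh2c : ∀ v ∈ Icc α β, c0 ≤ h2 v) :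
    ∃ C : ℝ, 1 ≤ C ∧
      ∀ k : ℤ, k ≠ 0 →
        ∀ qa : ℝ → ℝ,
          ContDiffOn ℝ 2 qa (Icc α β) → qa α = 1 → derivWithin qa (Icc α β) α = 0 →
          (∀ v ∈ Icc α β,
            derivWithin (fun w => h1 w * derivWithin qa (Icc α β) w) (Icc α β) v
              = (k:ℝ) ^ 2 * h2 v * qa v) →
          ∀ v ∈ Icc α β,
            C⁻¹ * |(k:ℝ)| * min (|(k:ℝ)| * (v - α)) 1
                ≤ derivWithin qa (Icc α β) v / qa v ∧
            derivWithin qa (Icc α β) v / qa v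
                ≤ C * |(k:ℝ)| * min (|(k:ℝ)| * (v - α)) 1 ∧
            C⁻¹ * Real.exp (|(k:ℝ)| * (v - α) / C) ≤ qa v ∧
            qa v ≤ Real.exp (C * |(k:ℝ)| * (v - α)) := by
  obtain ⟨M₁, hM₁⟩ := isCompact_Icc.exists_bound_of_continuousOn hh1.continuous.continuousOn
  obtain ⟨M₂, hM₂⟩ := isCompact_Icc.exists_bound_of_continuousOn hh2.continuous.continuousOn
  set M := max M₁ M₂
  have h₁_mem : ∀ v ∈ Icc α β, h1 v ∈ Icc c0 M := fun v hv =>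
    ⟨hh1c v hv, (le_norm_self _).trans ((hM₁ v hv).trans (le_max_left _ _))⟩
  have h₂_mem : ∀ v ∈ Icc α β, h2 v ∈ Icc c0 M := fun v hv =>
    ⟨hh2c v hv, (le_norm_self _).trans ((hM₂ v hv).trans (le_max_right _ _))⟩
  have hρ : 1 ≤ M / c0 := (one_le_div hc0).2
    ((h₁_mem α (left_mem_Icc.2 hαβ.le)).1.trans (h₁_mem α (left_mem_Icc.2 hαβ.le)).2)
  refine ⟨2 * (M / c0) * exp (M / c0), by nlinarith [one_le_exp (by linarith : 0 ≤ M / c0)],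
    fun k hk qa hqa hqa_α hqa'_α hODE v hv => ?_⟩
  have hs := IsNormalizedSolution.of_contDiffOn hαβ hc0 (abs_pos.2 (Int.cast_ne_zero.2 hk))
    (hh1.of_le (by norm_cast)) h₁_mem h₂_mem hqa hqa_α hqa'_α
    (fun v hv => by rw [hODE v hv, sq_abs])
  exact hs.deriv_div_and_growth_bounds hv le_rfl
end
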